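/- arXiv:2004.05924 — 2 statements merged into one kernel-verified Lean document; each statement's English description precedes it below -/
import Mathlib

section
/- Let K₃ = A_3^{{0,1}}, K₅ = A_5^{{0,1,2}}, K₇ = A_7^{{0,1,2,3}}. Assume: (i) the real numbers 1, log 3/log 5, log 3/log 7 are linearly independent over ℚ; and (ii) for every x ∈ ℝ³, the radial projection Π_x((K₃ × K₅ × K₇) ∖ {x}) has nonempty interior in the unit sphere S². Then there are infinitely many positive integers n such that binomial(2n, n) is coprime with 105 = 3 × 5 × 7. -/
open Finset

noncomputable def grE (t : ℝ) : ℂ := Complex.exp (2 * Real.pi * t * Complex.I)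

lemma grE_eq (t : ℝ) : grE t = Complex.exp ((2 * Real.pi * t : ℝ) * Complex.I) := by
  simp [grE]

lemma grE_abs (t : ℝ) : ‖grE t‖ = 1 := by
  rw [grE_eq]; exact Complex.norm_exp_ofReal_mul_I _

lemma grE_ne_zero (t : ℝ) : grE t ≠ 0 := Complex.exp_ne_zero _

lemma grE_zero : grE 0 = 1 := by simp [grE]

lemma grE_add (s t : ℝ) : grE (s + t) = grE s * grE t := by
  rw [grE, grE, grE, ← Complex.exp_add]; push_cast; ring_nf

lemma grE_nat_mul (n : ℕ) (t : ℝ) : grE (n * t) = grE t ^ n := by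
  rw [grE, grE, ← Complex.exp_nat_mul]; push_cast; ring_nf

lemma grE_int_mul (n : ℤ) (t : ℝ) : grE (n * t) = grE t ^ n := by
  rw [grE, grE, ← Complex.exp_int_mul]; push_cast; ring_nf

lemma grE_eq_one_iff (t : ℝ) : grE t = 1 ↔ ∃ n : ℤ, t = n := by
  rw [grE, Complex.exp_eq_one_iff]
  constructor
  · rintro ⟨n, hn⟩
    refine ⟨n, ?_⟩
    have h2 : (2 * (Real.pi : ℂ) * Complex.I) ≠ 0 := by
      simp [Real.pi_ne_zero, Complex.I_ne_zero]
    have : (t : ℂ) * (2 * Real.pi * Complex.I) = (n : ℂ) * (2 * Real.pi * Complex.I) := by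
      rw [← hn]; ring
    have := mul_right_cancel₀ h2 this
    exact_mod_cast this
  · rintro ⟨n, rfl⟩
    exact ⟨n, by push_cast; ring⟩

lemma grE_two_cos (t : ℝ) : grE t + grE (-t) = 2 * (Real.cos (2 * Real.pi * t) : ℂ) := by
  rw [grE_eq, grE_eq, Complex.ofReal_cos]
  rw [Complex.cos]
  push_cast
  ring_nf

noncomputable def grBase (u : ℝ) : ℝ := (1 + Real.cos (2 * Real.pi * u)) / 2

noncomputable def grCoef (K j : ℕ) : ℝ := ((2 * K).choose j : ℝ) / 4 ^ K

def grM (K j : ℕ) : ℤ := (j : ℤ) - K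

lemma grCoef_nonneg (K j : ℕ) : 0 ≤ grCoef K j := by
  unfold grCoef; positivity

lemma grBase_nonneg (u : ℝ) : 0 ≤ grBase u := by
  unfold grBase
  nlinarith [Real.neg_one_le_cos (2 * Real.pi * u)]

lemma grBase_le_one (u : ℝ) : grBase u ≤ 1 := by
  unfold grBase
  nlinarith [Real.cos_le_one (2 * Real.pi * u)]

lemma grP_expand (K : ℕ) (u : ℝ) :
    ((grBase u ^ K : ℝ) : ℂ)
      = ∑ j ∈ Finset.range (2 * K + 1), (grCoef K j : ℂ) * grE ((grM K j : ℝ) * u) := by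
  set z := grE u with hz
  have hz0 : z ≠ 0 := grE_ne_zero u
  have h1 : grE (-u) = z⁻¹ := by
    rw [show (-u) = ((-1 : ℤ) : ℝ) * u by push_cast; ring, grE_int_mul]; simp [hz]
  have h3 : z ^ 2 + 1 = 2 * ((Real.cos (2 * Real.pi * u) : ℝ) : ℂ) * z := by
    have h := grE_two_cos u
    rw [h1, ← hz] at h
    have hzz : z⁻¹ * z = 1 := inv_mul_cancel₀ hz0
    linear_combination z * h - hzz
  have hkey : ((grBase u : ℝ) : ℂ) * (4 * z) = (1 + z) ^ 2 := by
    unfold grBase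
    simp only [Complex.ofReal_div, Complex.ofReal_add, Complex.ofReal_one, Complex.ofReal_ofNat]
    linear_combination - h3
  have hc : (4 : ℂ) ^ K * z ^ K ≠ 0 :=
    mul_ne_zero (pow_ne_zero _ (by norm_num)) (pow_ne_zero _ hz0)
  apply mul_right_cancel₀ hc
  have lhs : ((grBase u ^ K : ℝ) : ℂ) * ((4:ℂ) ^ K * z ^ K) = (1 + z) ^ (2 * K) := by
    push_cast
    calc ((grBase u : ℝ) : ℂ) ^ K * ((4:ℂ) ^ K * z ^ K)
        = (((grBase u : ℝ) : ℂ) * (4 * z)) ^ K := by ring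
      _ = ((1 + z) ^ 2) ^ K := by rw [hkey]
      _ = (1 + z) ^ (2 * K) := by rw [← pow_mul, mul_comm]
  rw [lhs, Finset.sum_mul]
  have rhs : ∀ j ∈ Finset.range (2 * K + 1),
      (grCoef K j : ℂ) * grE ((grM K j : ℝ) * u) * ((4:ℂ) ^ K * z ^ K)
        = ((2 * K).choose j : ℂ) * z ^ j := by
    intro j hj
    rw [grE_int_mul]
    unfold grCoef grM
    have hzpow : z ^ ((j : ℤ) - K) * z ^ (K : ℤ) = z ^ (j : ℤ) := by
      rw [← zpow_add₀ hz0]; ring_nf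
    push_cast
    calc ((2 * K).choose j : ℂ) / 4 ^ K * z ^ ((j:ℤ) - (K:ℤ)) * ((4:ℂ) ^ K * z ^ K)
        = ((2 * K).choose j : ℂ) / 4 ^ K * (4:ℂ) ^ K * (z ^ ((j:ℤ) - (K:ℤ)) * z ^ (K:ℤ)) := by
          rw [zpow_natCast]; ring
      _ = ((2 * K).choose j : ℂ) * (z ^ ((j:ℤ) - (K:ℤ)) * z ^ (K:ℤ)) := by
          field_simp
      _ = ((2 * K).choose j : ℂ) * z ^ (j : ℤ) := by rw [hzpow]
      _ = ((2 * K).choose j : ℂ) * z ^ j := by rw [zpow_natCast]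
  rw [Finset.sum_congr rfl rhs, add_comm 1 z, add_pow]
  apply Finset.sum_congr rfl
  intro j hj
  simp [mul_comm]

lemma grBase_le_of_bad {v ε : ℝ} (hε : 0 < ε) (hε4 : ε ≤ 1 / 4)
    (hbad : ∀ B : ℤ, ε ≤ |v - B|) : grBase v ≤ grBase ε := by
  have hπ := Real.pi_pos
  have h1 : |v - round v| ≤ 1 / 2 := abs_sub_round v
  have h2 : ε ≤ |v - round v| := hbad _
  have hcos1 : Real.cos (2 * Real.pi * v) = Real.cos (2 * Real.pi * |v - round v|) := by
    have hh : 2 * Real.pi * v = 2 * Real.pi * (v - round v) + (round v : ℤ) * (2 * Real.pi) := by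
      push_cast; ring
    have habs2 : 2 * Real.pi * |v - round v| = |2 * Real.pi * (v - round v)| := by
      rw [abs_mul, abs_of_pos (by positivity : (0:ℝ) < 2 * Real.pi)]
    rw [hh, Real.cos_add_int_mul_two_pi, habs2, Real.cos_abs]
  have hcos2 : Real.cos (2 * Real.pi * |v - round v|) ≤ Real.cos (2 * Real.pi * ε) := by
    apply Real.cos_le_cos_of_nonneg_of_le_pi (by positivity) (by nlinarith [abs_nonneg (v - round v)])
      (by nlinarith [abs_nonneg (v - round v)])
  unfold grBase; rw [hcos1]; linarith

lemma grBase_lt_one {ε : ℝ} (hε : 0 < ε) (hε4 : ε ≤ 1 / 4) : grBase ε < 1 := by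
  have hπ := Real.pi_pos
  have : Real.cos (2 * Real.pi * ε) < Real.cos 0 := by
    apply Real.cos_lt_cos_of_nonneg_of_le_pi le_rfl (by nlinarith) (by positivity)
  rw [Real.cos_zero] at this
  unfold grBase; linarith

lemma grGeom_bound (t : ℝ) (h1 : grE t ≠ 1) (N : ℕ) :
    ‖∑ A ∈ Finset.range N, grE t ^ A‖ ≤ 2 / ‖grE t - 1‖ := by
  rw [geom_sum_eq h1, norm_div]
  have hb : 0 < ‖grE t - 1‖ := by
    exact norm_pos_iff.mpr (sub_ne_zero.mpr h1)
  apply div_le_div₀ (by norm_num) ?_ hb le_rfl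
  calc ‖grE t ^ N - 1‖ ≤ ‖grE t ^ N‖ + ‖(1 : ℂ)‖ := by
        exact norm_sub_le _ _
    _ ≤ 2 := by rw [norm_pow, grE_abs]; norm_num

lemma grKronecker (θ₁ θ₂ : ℝ)
    (hirr : ∀ m n k : ℤ, (m : ℝ) * θ₁ + (n : ℝ) * θ₂ = (k : ℝ) → m = 0 ∧ n = 0)
    (a b ε : ℝ) (hε : 0 < ε) (hε4 : ε ≤ 1 / 4) (N₀ : ℕ) :
    ∃ A : ℕ, N₀ ≤ A ∧ (∃ B : ℤ, |(A : ℝ) * θ₁ - a - B| < ε) ∧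
      (∃ C : ℤ, |(A : ℝ) * θ₂ - b - C| < ε) := by
  by_contra hcon
  push_neg at hcon
  have hbadA : ∀ A : ℕ, N₀ ≤ A →
      (∀ B : ℤ, ε ≤ |(A : ℝ) * θ₁ - a - B|) ∨ (∀ C : ℤ, ε ≤ |(A : ℝ) * θ₂ - b - C|) := by
    intro A hA
    by_cases hB : ∃ B : ℤ, |(A : ℝ) * θ₁ - a - B| < ε
    · exact Or.inr (hcon A hA hB)
    · push_neg at hB
      exact Or.inl hB
  set q := grBase ε with hqdef
  have hq0 : 0 ≤ q := grBase_nonneg ε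
  have hq1 : q < 1 := grBase_lt_one hε hε4
  -- choose K
  have ht : Filter.Tendsto (fun K : ℕ => (K : ℝ) ^ 2 * q ^ K) Filter.atTop (nhds 0) :=
    tendsto_pow_const_mul_const_pow_of_lt_one 2 hq0 hq1
  obtain ⟨K, hK8, hK1⟩ :=
    ((ht.eventually_lt_const (by norm_num : (0:ℝ) < 1 / 8)).and
      (Filter.eventually_ge_atTop 1)).exists
  set w := grCoef K K with hwdef
  have hKpos : (0 : ℝ) < K := by exact_mod_cast hK1
  have hw : 1 / (2 * (K : ℝ)) ≤ w := by
    have h4 : (4 : ℕ) ^ K ≤ 2 * K * (2 * K).choose K :=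
      Nat.four_pow_le_two_mul_self_mul_centralBinom K hK1
    have h4' : (4 : ℝ) ^ K ≤ 2 * K * ((2 * K).choose K : ℝ) := by exact_mod_cast h4
    rw [hwdef]
    unfold grCoef
    rw [div_le_div_iff₀ (by positivity) (by positivity)]
    calc (1 : ℝ) * 4 ^ K = 4 ^ K := one_mul _
      _ ≤ 2 * K * ((2 * K).choose K : ℝ) := h4'
      _ = ((2 * K).choose K : ℝ) * (2 * K) := by ring
  have hwpos : 0 < w := lt_of_lt_of_le (by positivity) hw
  have hwq : q ^ K < w ^ 2 / 2 := by
    have h1 : q ^ K < 1 / 8 / (K : ℝ) ^ 2 := by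
      rw [lt_div_iff₀ (by positivity)]
      linarith [hK8]
    have h2 : 1 / (4 * (K : ℝ) ^ 2) ≤ w ^ 2 := by
      have := mul_le_mul hw hw (by positivity) (le_of_lt hwpos)
      calc (1 : ℝ) / (4 * (K : ℝ) ^ 2) = 1 / (2 * K) * (1 / (2 * K)) := by
            field_simp; ring
        _ ≤ w * w := this
        _ = w ^ 2 := (sq w).symm
    calc q ^ K < 1 / 8 / (K : ℝ) ^ 2 := h1
      _ = (1 / (4 * (K : ℝ) ^ 2)) / 2 := by field_simp; ring
      _ ≤ w ^ 2 / 2 := by linarith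
  -- setup sums
  set R := Finset.range (2 * K + 1) with hRdef
  set pairs := R ×ˢ R with hpairsdef
  have hKK : (K, K) ∈ pairs := by
    rw [hpairsdef, Finset.mem_product, hRdef]
    simp only [Finset.mem_range]
    omega
  set φ : ℕ × ℕ → ℝ := fun p => (grM K p.1 : ℝ) * θ₁ + (grM K p.2 : ℝ) * θ₂ with hφdef
  set ψ : ℕ × ℕ → ℝ := fun p => (grM K p.1 : ℝ) * a + (grM K p.2 : ℝ) * b with hψdef
  set cc : ℕ × ℕ → ℝ := fun p => grCoef K p.1 * grCoef K p.2 with hccdef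
  set term : ℕ × ℕ → ℂ := fun p => (cc p : ℂ) * grE (-(ψ p)) with htermdef
  have hφ1 : ∀ p ∈ pairs.erase (K, K), grE (φ p) ≠ 1 := by
    intro p hp h1
    obtain ⟨k, hk⟩ := (grE_eq_one_iff _).mp h1
    have := hirr (grM K p.1) (grM K p.2) k (by rw [← hk])
    apply (Finset.mem_erase.mp hp).1
    have h1' : p.1 = K := by have := this.1; unfold grM at this; omega
    have h2' : p.2 = K := by have := this.2; unfold grM at this; omega
    exact Prod.ext h1' h2'
  set f : ℕ → ℝ := fun A => grBase ((A : ℝ) * θ₁ - a) ^ K * grBase ((A : ℝ) * θ₂ - b) ^ K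
    with hfdef
  have hA : ∀ A : ℕ, ((f A : ℝ) : ℂ) = ∑ p ∈ pairs, term p * grE (φ p) ^ A := by
    intro A
    have e1 := grP_expand K ((A : ℝ) * θ₁ - a)
    have e2 := grP_expand K ((A : ℝ) * θ₂ - b)
    calc ((f A : ℝ) : ℂ)
        = ((grBase ((A : ℝ) * θ₁ - a) ^ K : ℝ) : ℂ)
          * ((grBase ((A : ℝ) * θ₂ - b) ^ K : ℝ) : ℂ) := by rw [hfdef]; push_cast; ring
      _ = (∑ j ∈ R, (grCoef K j : ℂ) * grE ((grM K j : ℝ) * ((A : ℝ) * θ₁ - a)))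
          * (∑ l ∈ R, (grCoef K l : ℂ) * grE ((grM K l : ℝ) * ((A : ℝ) * θ₂ - b))) := by
            rw [e1, e2]
      _ = ∑ j ∈ R, ∑ l ∈ R,
            ((grCoef K j : ℂ) * grE ((grM K j : ℝ) * ((A : ℝ) * θ₁ - a)))
            * ((grCoef K l : ℂ) * grE ((grM K l : ℝ) * ((A : ℝ) * θ₂ - b))) :=
          Finset.sum_mul_sum _ _ _ _
      _ = ∑ p ∈ pairs,
            ((grCoef K p.1 : ℂ) * grE ((grM K p.1 : ℝ) * ((A : ℝ) * θ₁ - a)))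
            * ((grCoef K p.2 : ℂ) * grE ((grM K p.2 : ℝ) * ((A : ℝ) * θ₂ - b))) :=
          (Finset.sum_product' _ _ _).symm
      _ = ∑ p ∈ pairs, term p * grE (φ p) ^ A := by
          apply Finset.sum_congr rfl
          intro p hp
          have harg : (grM K p.1 : ℝ) * ((A : ℝ) * θ₁ - a)
              + (grM K p.2 : ℝ) * ((A : ℝ) * θ₂ - b) = -(ψ p) + (A : ℝ) * φ p := by
            rw [hψdef, hφdef]; push_cast; ring
          calc ((grCoef K p.1 : ℂ) * grE ((grM K p.1 : ℝ) * ((A : ℝ) * θ₁ - a)))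
              * ((grCoef K p.2 : ℂ) * grE ((grM K p.2 : ℝ) * ((A : ℝ) * θ₂ - b)))
              = (cc p : ℂ) * grE ((grM K p.1 : ℝ) * ((A : ℝ) * θ₁ - a)
                  + (grM K p.2 : ℝ) * ((A : ℝ) * θ₂ - b)) := by
                rw [grE_add, hccdef]; push_cast; ring
            _ = (cc p : ℂ) * grE (-(ψ p) + (A : ℝ) * φ p) := by rw [harg]
            _ = term p * grE (φ p) ^ A := by
                rw [grE_add, grE_nat_mul, htermdef]; ring
  have key : ∀ N : ℕ, ((∑ A ∈ Finset.range N, f A : ℝ) : ℂ)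
      = ((w ^ 2 : ℝ) : ℂ) * N
        + ∑ p ∈ pairs.erase (K, K), term p * ∑ A ∈ Finset.range N, grE (φ p) ^ A := by
    intro N
    have hKKterm : term (K, K) * ∑ A ∈ Finset.range N, grE (φ (K, K)) ^ A
        = ((w ^ 2 : ℝ) : ℂ) * N := by
      have hm : grM K K = 0 := by unfold grM; omega
      have hφ0 : φ (K, K) = 0 := by rw [hφdef]; simp [hm]
      have hψ0 : ψ (K, K) = 0 := by rw [hψdef]; simp [hm]
      rw [htermdef]
      simp only [hφ0, hψ0, neg_zero, grE_zero, one_pow]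
      rw [Finset.sum_const, Finset.card_range]
      rw [hccdef, hwdef]
      push_cast
      ring
    calc ((∑ A ∈ Finset.range N, f A : ℝ) : ℂ)
        = ∑ A ∈ Finset.range N, ((f A : ℝ) : ℂ) := by push_cast; rfl
      _ = ∑ A ∈ Finset.range N, ∑ p ∈ pairs, term p * grE (φ p) ^ A :=
          Finset.sum_congr rfl fun A _ => hA A
      _ = ∑ p ∈ pairs, ∑ A ∈ Finset.range N, term p * grE (φ p) ^ A := Finset.sum_comm
      _ = ∑ p ∈ pairs, term p * ∑ A ∈ Finset.range N, grE (φ p) ^ A := by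
          apply Finset.sum_congr rfl
          intro p hp
          rw [Finset.mul_sum]
      _ = (∑ p ∈ pairs.erase (K, K), term p * ∑ A ∈ Finset.range N, grE (φ p) ^ A)
          + term (K, K) * ∑ A ∈ Finset.range N, grE (φ (K, K)) ^ A :=
          (Finset.sum_erase_add _ _ hKK).symm
      _ = ((w ^ 2 : ℝ) : ℂ) * N
          + ∑ p ∈ pairs.erase (K, K), term p * ∑ A ∈ Finset.range N, grE (φ p) ^ A := by
          rw [hKKterm]; ring
  set Cst := ∑ p ∈ pairs.erase (K, K), cc p * (2 / ‖grE (φ p) - 1‖) with hCstdef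
  have hCst0 : 0 ≤ Cst := by
    rw [hCstdef]
    apply Finset.sum_nonneg
    intro p hp
    have := grCoef_nonneg K p.1
    have := grCoef_nonneg K p.2
    have : 0 ≤ cc p := by rw [hccdef]; exact mul_nonneg (grCoef_nonneg K p.1) (grCoef_nonneg K p.2)
    positivity
  have habs : ∀ N : ℕ, |(∑ A ∈ Finset.range N, f A) - w ^ 2 * N| ≤ Cst := by
    intro N
    have hk := key N
    have hofr : (((∑ A ∈ Finset.range N, f A) - w ^ 2 * N : ℝ) : ℂ)
        = ∑ p ∈ pairs.erase (K, K), term p * ∑ A ∈ Finset.range N, grE (φ p) ^ A := by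
      push_cast at hk ⊢
      linear_combination hk
    calc |(∑ A ∈ Finset.range N, f A) - w ^ 2 * N|
        = ‖(((∑ A ∈ Finset.range N, f A) - w ^ 2 * N : ℝ) : ℂ)‖ :=
          (Complex.norm_real _).symm
      _ = ‖∑ p ∈ pairs.erase (K, K),
            term p * ∑ A ∈ Finset.range N, grE (φ p) ^ A‖ := by rw [hofr]
      _ ≤ ∑ p ∈ pairs.erase (K, K),
            ‖term p * ∑ A ∈ Finset.range N, grE (φ p) ^ A‖ :=
          norm_sum_le _ _
      _ ≤ Cst := by
          rw [hCstdef]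
          apply Finset.sum_le_sum
          intro p hp
          have hcc0 : 0 ≤ cc p := by
            rw [hccdef]; exact mul_nonneg (grCoef_nonneg K p.1) (grCoef_nonneg K p.2)
          rw [norm_mul, norm_mul, Complex.norm_real, Real.norm_eq_abs, abs_of_nonneg hcc0, grE_abs, mul_one]
          exact mul_le_mul_of_nonneg_left (grGeom_bound _ (hφ1 p hp) N) hcc0
  -- pointwise bounds
  have hf0 : ∀ A : ℕ, 0 ≤ f A := by
    intro A
    rw [hfdef]
    exact mul_nonneg (pow_nonneg (grBase_nonneg _) _) (pow_nonneg (grBase_nonneg _) _)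
  have hf1 : ∀ A : ℕ, f A ≤ 1 := by
    intro A
    rw [hfdef]
    exact mul_le_one₀ (pow_le_one₀ (grBase_nonneg _) (grBase_le_one _))
      (pow_nonneg (grBase_nonneg _) _) (pow_le_one₀ (grBase_nonneg _) (grBase_le_one _))
  have hfq : ∀ A : ℕ, N₀ ≤ A → f A ≤ q ^ K := by
    intro A hA'
    rcases hbadA A hA' with hb | hb
    · have h1 : grBase ((A : ℝ) * θ₁ - a) ≤ q := by
        apply grBase_le_of_bad hε hε4
        intro B
        have := hb B
        calc ε ≤ |(A : ℝ) * θ₁ - a - B| := this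
          _ = |((A : ℝ) * θ₁ - a) - B| := by ring_nf
      rw [hfdef]
      calc grBase ((A : ℝ) * θ₁ - a) ^ K * grBase ((A : ℝ) * θ₂ - b) ^ K
          ≤ q ^ K * 1 := by
            apply mul_le_mul (pow_le_pow_left₀ (grBase_nonneg _) h1 K)
              (pow_le_one₀ (grBase_nonneg _) (grBase_le_one _))
              (pow_nonneg (grBase_nonneg _) _) (pow_nonneg hq0 _)
        _ = q ^ K := mul_one _
    · have h1 : grBase ((A : ℝ) * θ₂ - b) ≤ q := by
        apply grBase_le_of_bad hε hε4
        intro C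
        have := hb C
        calc ε ≤ |(A : ℝ) * θ₂ - b - C| := this
          _ = |((A : ℝ) * θ₂ - b) - C| := by ring_nf
      rw [hfdef]
      calc grBase ((A : ℝ) * θ₁ - a) ^ K * grBase ((A : ℝ) * θ₂ - b) ^ K
          ≤ 1 * q ^ K := by
            apply mul_le_mul (pow_le_one₀ (grBase_nonneg _) (grBase_le_one _))
              (pow_le_pow_left₀ (grBase_nonneg _) h1 K) (pow_nonneg (grBase_nonneg _) _)
              (by norm_num)
        _ = q ^ K := one_mul _
  have hup : ∀ N : ℕ, (∑ A ∈ Finset.range N, f A) ≤ N₀ + N * q ^ K := by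
    intro N
    calc (∑ A ∈ Finset.range N, f A)
        ≤ ∑ A ∈ Finset.range N, (q ^ K + if A < N₀ then 1 else 0) := by
          apply Finset.sum_le_sum
          intro A _
          by_cases hAN : A < N₀
          · simp only [hAN, if_true]
            linarith [hf1 A, pow_nonneg hq0 K]
          · simp only [hAN, if_false]
            push_neg at hAN
            linarith [hfq A hAN]
      _ = N * q ^ K + ∑ A ∈ Finset.range N, (if A < N₀ then (1:ℝ) else 0) := by
          rw [Finset.sum_add_distrib, Finset.sum_const, Finset.card_range]
          ring_nf
      _ ≤ N * q ^ K + N₀ := by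
          have h1 : (∑ A ∈ Finset.range N, (if A < N₀ then (1:ℝ) else 0))
              = (((Finset.range N).filter (· < N₀)).card : ℝ) := by
            rw [Finset.sum_boole]
          have h2 : ((Finset.range N).filter (· < N₀)).card ≤ N₀ := by
            apply le_trans (Finset.card_le_card ?_) (le_of_eq (Finset.card_range N₀))
            intro A hA
            simp only [Finset.mem_filter, Finset.mem_range] at hA ⊢
            exact hA.2
          have h3 : (((Finset.range N).filter (· < N₀)).card : ℝ) ≤ (N₀ : ℝ) := by
            exact_mod_cast h2
          rw [h1]
          linarith
      _ = N₀ + N * q ^ K := by ring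
  obtain ⟨N, hN⟩ := exists_nat_gt ((N₀ + Cst) / (w ^ 2 - q ^ K))
  have hpos : 0 < w ^ 2 - q ^ K := by nlinarith [hwq, hwpos]
  have hlow : w ^ 2 * N - Cst ≤ ∑ A ∈ Finset.range N, f A := by
    have h := (abs_le.mp (habs N)).1
    linarith
  have hupN := hup N
  have hfin : (N₀ : ℝ) + Cst < N * (w ^ 2 - q ^ K) := by
    rw [div_lt_iff₀ hpos] at hN
    linarith
  nlinarith

lemma grDigitSum_bound (bb D : ℕ) (hD : 2 * D + 1 ≤ bb)
    (e : ℕ → ℕ) (he : ∀ k, e k ≤ D) :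
    ∀ i : ℕ, 2 * (∑ k ∈ Finset.range i, e k * bb ^ k) + 1 ≤ bb ^ i := by
  intro i
  induction i with
  | zero => simp
  | succ i ih =>
    rw [Finset.sum_range_succ]
    have h2 : 2 * e i ≤ bb - 1 := by have := he i; omega
    have h3 : 2 * (e i * bb ^ i) ≤ (bb - 1) * bb ^ i := by
      calc 2 * (e i * bb ^ i) = 2 * e i * bb ^ i := by ring
        _ ≤ (bb - 1) * bb ^ i := Nat.mul_le_mul_right _ h2
    have h4 : bb ^ i + (bb - 1) * bb ^ i = bb ^ (i + 1) := by
      have hb1 : 1 ≤ bb := by omega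
      calc bb ^ i + (bb - 1) * bb ^ i = (1 + (bb - 1)) * bb ^ i := by ring
        _ = bb * bb ^ i := by congr 1; omega
        _ = bb ^ (i + 1) := by rw [pow_succ]; ring
    calc 2 * (∑ k ∈ Finset.range i, e k * bb ^ k + e i * bb ^ i) + 1
        = (2 * ∑ k ∈ Finset.range i, e k * bb ^ k + 1) + 2 * (e i * bb ^ i) := by ring
      _ ≤ bb ^ i + (bb - 1) * bb ^ i := Nat.add_le_add ih h3
      _ = bb ^ (i + 1) := h4

lemma grResidue (bb D A : ℕ) (hb : 3 ≤ bb) (hD : 2 * D + 1 ≤ bb)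
    (d : ℕ → ℕ) (hd : ∀ i, d i ≤ D) :
    ∀ i, 1 ≤ i →
      2 * ((bb ^ A + ∑ k ∈ Finset.range A, d k * bb ^ (A - 1 - k)) % bb ^ i) < bb ^ i := by
  set e : ℕ → ℕ := fun k => d (A - 1 - k) with hedef
  have he : ∀ k, e k ≤ D := fun k => hd _
  have hrefl : ∑ k ∈ Finset.range A, d k * bb ^ (A - 1 - k)
      = ∑ k ∈ Finset.range A, e k * bb ^ k := by
    rw [← Finset.sum_range_reflect (fun k => e k * bb ^ k) A]
    apply Finset.sum_congr rfl
    intro j hj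
    rw [Finset.mem_range] at hj
    rw [hedef]
    simp only []
    congr 1
    congr 1
    omega
  rw [hrefl]
  intro i hi
  set S := ∑ k ∈ Finset.range A, e k * bb ^ k with hSdef
  rcases le_or_gt i A with hiA | hiA
  · -- i ≤ A
    have hsplit : S = (∑ k ∈ Finset.range i, e k * bb ^ k)
        + ∑ k ∈ Finset.Ico i A, e k * bb ^ k := by
      rw [hSdef, ← Finset.sum_range_add_sum_Ico _ hiA]
    have hdvd : bb ^ i ∣ (bb ^ A + ∑ k ∈ Finset.Ico i A, e k * bb ^ k) := by
      apply Nat.dvd_add (pow_dvd_pow bb hiA)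
      apply Finset.dvd_sum
      intro k hk
      rw [Finset.mem_Ico] at hk
      exact Dvd.dvd.mul_left (pow_dvd_pow bb hk.1) _
    obtain ⟨c, hc⟩ := hdvd
    have harr : bb ^ A + S = (∑ k ∈ Finset.range i, e k * bb ^ k) + bb ^ i * c := by
      rw [hsplit, ← hc]; ring
    rw [harr, Nat.add_mul_mod_self_left]
    have hless := grDigitSum_bound bb D hD e he i
    have : (∑ k ∈ Finset.range i, e k * bb ^ k) % bb ^ i
        = ∑ k ∈ Finset.range i, e k * bb ^ k := Nat.mod_eq_of_lt (by omega)
    rw [this]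
    omega
  · -- A < i
    have hSb := grDigitSum_bound bb D hD e he A
    have h3b : 3 * bb ^ A ≤ bb ^ (A + 1) := by
      rw [pow_succ]
      calc 3 * bb ^ A = bb ^ A * 3 := by ring
        _ ≤ bb ^ A * bb := Nat.mul_le_mul_left _ hb
    have hpow : bb ^ (A + 1) ≤ bb ^ i := Nat.pow_le_pow_right (by omega) (by omega)
    have hlt : 2 * (bb ^ A + S) < bb ^ i := by omega
    have : (bb ^ A + S) % bb ^ i = bb ^ A + S := Nat.mod_eq_of_lt (by omega)
    rw [this]
    omega

lemma grDigitFloor (bb D A : ℕ) (hb : 3 ≤ bb) (hD : 2 * D + 1 ≤ bb)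
    (d : ℕ → ℕ) (hd : ∀ i, d i ≤ D) (s : ℝ)
    (hs : s = (bb : ℝ) ^ A * (1 + ∑' i : ℕ, (d i : ℝ) / (bb : ℝ) ^ (i + 1))) :
    (∀ i : ℕ, 1 ≤ i → 2 * (⌊s⌋₊ % bb ^ i) < bb ^ i) ∧ bb ^ A ≤ ⌊s⌋₊ := by
  have hbR : (3 : ℝ) ≤ (bb : ℝ) := by exact_mod_cast hb
  have hbpos : (0 : ℝ) < bb := by linarith
  have hrpos : (0 : ℝ) ≤ 1 / bb := by positivity
  have hrlt : (1 : ℝ) / bb < 1 := by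
    rw [div_lt_one hbpos]; linarith
  set g : ℕ → ℝ := fun i => (d i : ℝ) / (bb : ℝ) ^ (i + 1) with hgdef
  have hg0 : ∀ i, 0 ≤ g i := by
    intro i; rw [hgdef]; positivity
  have hcmp : ∀ i, g i ≤ ((D : ℝ) * (1 / bb)) * (1 / bb) ^ i := by
    intro i
    have h1 : ((d i : ℝ)) ≤ (D : ℝ) := by exact_mod_cast hd i
    have h2 : ((D : ℝ) * (1 / bb)) * (1 / bb) ^ i = (D : ℝ) / (bb : ℝ) ^ (i + 1) := by
      rw [div_pow, one_pow, pow_succ]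
      field_simp
    rw [hgdef, h2]
    simp only []
    gcongr
  have hgeo : Summable (fun i : ℕ => (1 / (bb : ℝ)) ^ i) :=
    summable_geometric_of_lt_one hrpos hrlt
  have hsum : Summable g := Summable.of_nonneg_of_le hg0 hcmp (hgeo.mul_left _)
  have hsumshift : Summable (fun i => g (i + A)) := (summable_nat_add_iff A).mpr hsum
  have htail_le : ∑' i, g (i + A) ≤ (D : ℝ) / (bb - 1) * (1 / bb) ^ A := by
    have h1 : ∀ i, g (i + A) ≤ ((D : ℝ) * (1 / bb) ^ (A + 1)) * (1 / bb) ^ i := by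
      intro i
      calc g (i + A) ≤ ((D : ℝ) * (1 / bb)) * (1 / bb) ^ (i + A) := hcmp (i + A)
        _ = ((D : ℝ) * (1 / bb) ^ (A + 1)) * (1 / bb) ^ i := by rw [pow_add, pow_succ]; ring
    calc ∑' i, g (i + A) ≤ ∑' i, ((D : ℝ) * (1 / bb) ^ (A + 1)) * (1 / bb) ^ i :=
          Summable.tsum_le_tsum h1 hsumshift (hgeo.mul_left _)
      _ = ((D : ℝ) * (1 / bb) ^ (A + 1)) * (1 - 1 / (bb:ℝ))⁻¹ := by
          rw [tsum_mul_left, tsum_geometric_of_lt_one hrpos hrlt]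
      _ = (D : ℝ) / (bb - 1) * (1 / bb) ^ A := by
          have hne : (bb : ℝ) - 1 ≠ 0 := by linarith
          rw [pow_succ]
          field_simp
  set τ := (bb : ℝ) ^ A * ∑' i, g (i + A) with hτdef
  have hτ0 : 0 ≤ τ := mul_nonneg (by positivity) (tsum_nonneg fun i => hg0 _)
  have hτh : τ ≤ 1 / 2 := by
    have hD2 : 2 * (D : ℝ) ≤ (bb : ℝ) - 1 := by
      have h' : ((2 * D + 1 : ℕ) : ℝ) ≤ (bb : ℝ) := by exact_mod_cast hD
      push_cast at h'
      linarith
    have hbb1 : (0 : ℝ) < (bb : ℝ) - 1 := by linarith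
    calc τ ≤ (bb : ℝ) ^ A * ((D : ℝ) / (bb - 1) * (1 / bb) ^ A) :=
          mul_le_mul_of_nonneg_left htail_le (by positivity)
      _ = (D : ℝ) / (bb - 1) := by
          rw [div_pow, one_pow]
          have : (bb : ℝ) ^ A ≠ 0 := by positivity
          field_simp
      _ ≤ 1 / 2 := by rw [div_le_div_iff₀ hbb1 (by norm_num)]; linarith
  set T : ℕ := ∑ k ∈ Finset.range A, d k * bb ^ (A - 1 - k) with hTdef
  have hfin : (bb : ℝ) ^ A * ∑ i ∈ Finset.range A, g i = (T : ℝ) := by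
    rw [hTdef, Finset.mul_sum]
    push_cast
    apply Finset.sum_congr rfl
    intro i hi
    rw [Finset.mem_range] at hi
    rw [hgdef]
    simp only []
    have hexp : (bb : ℝ) ^ (A - 1 - i) * (bb : ℝ) ^ (i + 1) = (bb : ℝ) ^ A := by
      rw [← pow_add]; congr 1; omega
    have hne : (bb : ℝ) ^ (i + 1) ≠ 0 := by positivity
    calc (bb : ℝ) ^ A * ((d i : ℝ) / bb ^ (i + 1))
        = (d i : ℝ) * ((bb : ℝ) ^ A / bb ^ (i + 1)) := by ring
      _ = (d i : ℝ) * (bb : ℝ) ^ (A - 1 - i) := by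
          rw [← hexp, mul_div_cancel_right₀ _ hne]
  have hsplit : s = ((bb ^ A + T : ℕ) : ℝ) + τ := by
    have h' : s = (bb : ℝ) ^ A + ((bb : ℝ) ^ A * ∑ i ∈ Finset.range A, g i) + τ := by
      rw [hs, ← hsum.sum_add_tsum_nat_add A, hτdef]
      ring
    rw [h', hfin]
    push_cast
    ring
  have hfloor : ⌊s⌋₊ = bb ^ A + T := by
    rw [hsplit, Nat.floor_eq_iff (add_nonneg (Nat.cast_nonneg _) hτ0)]
    constructor
    · linarith
    · push_cast
      linarith
  constructor
  · intro i hi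
    rw [hfloor, hTdef]
    exact grResidue bb D A hb hD d hd i hi
  · rw [hfloor]
    omega

lemma grNotDvd (p n : ℕ) (hp : p.Prime) (hn : ∀ i : ℕ, 1 ≤ i → 2 * (n % p ^ i) < p ^ i) :
    ¬ p ∣ (2 * n).choose n := by
  have hkn : n ≤ 2 * n := by omega
  have hnb : Nat.log p (2 * n) < Nat.log p (2 * n) + 1 := Nat.lt_succ_self _
  have hem := Nat.Prime.emultiplicity_choose hp hkn hnb
  have hsub : 2 * n - n = n := by omega
  rw [hsub] at hem
  have hempty : ({i ∈ Finset.Ico 1 (Nat.log p (2 * n) + 1) |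
      p ^ i ≤ n % p ^ i + n % p ^ i} : Finset ℕ) = ∅ := by
    apply Finset.filter_false_of_mem
    intro i hi
    rw [Finset.mem_Ico] at hi
    have := hn i hi.1
    omega
  rw [hempty] at hem
  simp only [Finset.card_empty, Nat.cast_zero] at hem
  exact emultiplicity_eq_zero.mp hem

lemma grCoprime105 (n : ℕ)
    (h3 : ∀ i : ℕ, 1 ≤ i → 2 * (n % 3 ^ i) < 3 ^ i)
    (h5 : ∀ i : ℕ, 1 ≤ i → 2 * (n % 5 ^ i) < 5 ^ i)
    (h7 : ∀ i : ℕ, 1 ≤ i → 2 * (n % 7 ^ i) < 7 ^ i) :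
    Nat.Coprime ((2 * n).choose n) 105 := by
  have c3 : Nat.Coprime ((2 * n).choose n) 3 :=
    ((Nat.Prime.coprime_iff_not_dvd (by norm_num)).mpr (grNotDvd 3 n (by norm_num) h3)).symm
  have c5 : Nat.Coprime ((2 * n).choose n) 5 :=
    ((Nat.Prime.coprime_iff_not_dvd (by norm_num)).mpr (grNotDvd 5 n (by norm_num) h5)).symm
  have c7 : Nat.Coprime ((2 * n).choose n) 7 :=
    ((Nat.Prime.coprime_iff_not_dvd (by norm_num)).mpr (grNotDvd 7 n (by norm_num) h7)).symm
  have : (105 : ℕ) = 3 * (5 * 7) := by norm_num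
  rw [this]
  exact Nat.Coprime.mul_right c3 (Nat.Coprime.mul_right c5 c7)

/-- The set of points of `[0,1]` admitting a base-`b` expansion
`x = Σ_{i=1}^∞ d_i b^{-i}` with every digit `d_i` in `B`. -/
noncomputable def digitSet (b : ℕ) (B : Set ℕ) : Set ℝ :=
  {x : ℝ | ∃ d : ℕ → ℕ, (∀ i, d i ∈ B) ∧ x = ∑' i : ℕ, (d i : ℝ) / (b : ℝ) ^ (i + 1)}

lemma grDigitSet_nonneg {b : ℕ} {B : Set ℕ} {t : ℝ} (ht : t ∈ digitSet b B) : 0 ≤ t := by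
  obtain ⟨d, _, rfl⟩ := ht
  exact tsum_nonneg fun i => by positivity

/-- Conditional answer to Graham's question: assuming the `ℚ`-linear independence of
`1, log 3 / log 5, log 3 / log 7` and that every radial projection of
`K₃ × K₅ × K₇` has nonempty interior in `S²`, there are infinitely many `n` with
`binomial(2n, n)` coprime to `105`. -/
theorem graham_of_radial_projection
    (hlin : LinearIndependent ℚ
      ![(1 : ℝ), Real.log 3 / Real.log 5, Real.log 3 / Real.log 7])
    (hproj : ∀ x : EuclideanSpace ℝ (Fin 3),
      (interior {z : Metric.sphere (0 : EuclideanSpace ℝ (Fin 3)) 1 |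
        ∃ y : EuclideanSpace ℝ (Fin 3), y ≠ x ∧
          y 0 ∈ digitSet 3 {0, 1} ∧
          y 1 ∈ digitSet 5 {0, 1, 2} ∧
          y 2 ∈ digitSet 7 {0, 1, 2, 3} ∧
          (z : EuclideanSpace ℝ (Fin 3)) = ‖y - x‖⁻¹ • (y - x)}).Nonempty) :
    ∀ N : ℕ, ∃ n : ℕ, N < n ∧ Nat.Coprime ((2 * n).choose n) 105 := by
  intro N
  classical
  set E := EuclideanSpace ℝ (Fin 3) with hEdef
  set x : E := (WithLp.equiv 2 (Fin 3 → ℝ)).symm (fun _ => (-1 : ℝ)) with hxdef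
  have hx : ∀ i : Fin 3, x i = -1 := fun i => rfl
  set S := {z : Metric.sphere (0 : E) 1 |
        ∃ y : E, y ≠ x ∧
          y 0 ∈ digitSet 3 {0, 1} ∧
          y 1 ∈ digitSet 5 {0, 1, 2} ∧
          y 2 ∈ digitSet 7 {0, 1, 2, 3} ∧
          (z : E) = ‖y - x‖⁻¹ • (y - x)} with hSdef
  obtain ⟨z₀, hz₀⟩ : (interior S).Nonempty := hproj x
  have hz₀S : z₀ ∈ S := interior_subset hz₀
  obtain ⟨ε₀, hε₀pos, hball⟩ : ∃ ε > 0, Metric.ball z₀ ε ⊆ S := by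
    rw [mem_interior_iff_mem_nhds, Metric.mem_nhds_iff] at hz₀
    exact hz₀
  -- coordinates of z₀ are positive
  have hcoord : ∀ (y : E) (z : Metric.sphere (0 : E) 1),
      (z : E) = ‖y - x‖⁻¹ • (y - x) → ∀ i, (z : E) i = ‖y - x‖⁻¹ * (y i + 1) := by
    intro y z hz i
    have : (z : E) i = (‖y - x‖⁻¹ • (y - x)) i := by rw [hz]
    rw [this, PiLp.smul_apply, PiLp.sub_apply, hx i, smul_eq_mul]
    ring_nf
  obtain ⟨y₁, hy₁ne, hy₁0, hy₁1, hy₁2, hy₁eq⟩ := hz₀S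
  have hy₁pos : 0 < ‖y₁ - x‖ := by
    rw [norm_pos_iff]
    exact sub_ne_zero.mpr hy₁ne
  have hzc : ∀ i, (z₀ : E) i = ‖y₁ - x‖⁻¹ * (y₁ i + 1) := hcoord y₁ z₀ hy₁eq
  have hc0pos : 0 < (z₀ : E) 0 := by
    rw [hzc 0]
    have := grDigitSet_nonneg hy₁0
    positivity
  have hc1pos : 0 < (z₀ : E) 1 := by
    rw [hzc 1]
    have := grDigitSet_nonneg hy₁1
    positivity
  have hc2pos : 0 < (z₀ : E) 2 := by
    rw [hzc 2]
    have := grDigitSet_nonneg hy₁2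
    positivity
  set c0 := (z₀ : E) 0
  set c1 := (z₀ : E) 1
  set c2 := (z₀ : E) 2
  set astar := Real.log (c1 / c0) with hastar
  set bstar := Real.log (c2 / c0) with hbstar
  -- the direction map
  set w : ℝ × ℝ → E := fun p =>
    (WithLp.equiv 2 (Fin 3 → ℝ)).symm ![1, Real.exp p.1, Real.exp p.2] with hwdef
  have hwapp : ∀ p : ℝ × ℝ, (w p 0 = 1 ∧ w p 1 = Real.exp p.1 ∧ w p 2 = Real.exp p.2) :=
    fun p => ⟨rfl, rfl, rfl⟩
  have hwne : ∀ p, w p ≠ 0 := by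
    intro p hp
    have h1 : (1 : ℝ) = 0 := by rw [← (hwapp p).1, hp]; rfl
    exact one_ne_zero h1
  have hwnorm : ∀ p, 0 < ‖w p‖ := fun p => norm_pos_iff.mpr (hwne p)
  set G : ℝ × ℝ → E := fun p => ‖w p‖⁻¹ • w p with hGdef
  have hwcont : Continuous w := by
    rw [hwdef]
    apply Continuous.comp (PiLp.continuous_toLp 2 (fun _ : Fin 3 => ℝ))
    apply continuous_pi
    intro i
    fin_cases i
    · simpa using continuous_const
    · have h : Continuous fun p : ℝ × ℝ => Real.exp p.1 := Real.continuous_exp.comp continuous_fst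
      simpa using h
    · have h : Continuous fun p : ℝ × ℝ => Real.exp p.2 := Real.continuous_exp.comp continuous_snd
      simpa using h
  have hGcont : Continuous G := by
    rw [hGdef]
    apply Continuous.smul ((hwcont.norm).inv₀ fun p => (hwnorm p).ne') hwcont
  have hznorm : ‖(z₀ : E)‖ = 1 := by
    have := z₀.2
    rwa [mem_sphere_zero_iff_norm] at this
  have hGval : G (astar, bstar) = (z₀ : E) := by
    have hwstar : w (astar, bstar) = c0⁻¹ • (z₀ : E) := by
      have h0 : w (astar, bstar) 0 = (c0⁻¹ • (z₀ : E)) 0 := by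
        rw [(hwapp _).1, PiLp.smul_apply, smul_eq_mul]
        show (1 : ℝ) = c0⁻¹ * c0
        rw [inv_mul_cancel₀ hc0pos.ne']
      have h1 : w (astar, bstar) 1 = (c0⁻¹ • (z₀ : E)) 1 := by
        rw [(hwapp _).2.1, PiLp.smul_apply, smul_eq_mul]
        show Real.exp astar = c0⁻¹ * c1
        rw [hastar, Real.exp_log (by positivity)]
        field_simp
      have h2 : w (astar, bstar) 2 = (c0⁻¹ • (z₀ : E)) 2 := by
        rw [(hwapp _).2.2, PiLp.smul_apply, smul_eq_mul]
        show Real.exp bstar = c0⁻¹ * c2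
        rw [hbstar, Real.exp_log (by positivity)]
        field_simp
      refine PiLp.ext fun i => ?_
      fin_cases i
      · exact h0
      · exact h1
      · exact h2
    rw [hGdef]
    simp only []
    rw [hwstar, norm_smul, hznorm, mul_one, norm_inv, Real.norm_eq_abs,
      abs_of_pos hc0pos, inv_inv, smul_smul, mul_inv_cancel₀ hc0pos.ne', one_smul]
  obtain ⟨δ, hδpos, hδ⟩ : ∃ δ > 0, ∀ p : ℝ × ℝ,
      dist p (astar, bstar) < δ → dist (G p) (G (astar, bstar)) < ε₀ :=
    Metric.continuous_iff.mp hGcont (astar, bstar) ε₀ hε₀pos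
  rw [hGval] at hδ
  -- logs
  have hl3 : 0 < Real.log 3 := Real.log_pos (by norm_num)
  have hl5 : 0 < Real.log 5 := Real.log_pos (by norm_num)
  have hl7 : 0 < Real.log 7 := Real.log_pos (by norm_num)
  set θ₁ := Real.log 3 / Real.log 5 with hθ₁
  set θ₂ := Real.log 3 / Real.log 7 with hθ₂
  have hθ₁pos : 0 < θ₁ := div_pos hl3 hl5
  have hθ₂pos : 0 < θ₂ := div_pos hl3 hl7
  have hirr : ∀ m n k : ℤ, (m : ℝ) * θ₁ + (n : ℝ) * θ₂ = (k : ℝ) → m = 0 ∧ n = 0 := by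
    intro m n k h
    have hli := Fintype.linearIndependent_iff.mp hlin
    have hg := hli ![(-k : ℚ), (m : ℚ), (n : ℚ)] ?_
    · constructor
      · have h1 := hg 1
        simp only [Matrix.cons_val_one, Matrix.head_cons, Matrix.cons_val_zero] at h1
        exact_mod_cast h1
      · have h2 := hg 2
        simp only [Matrix.cons_val_two, Matrix.tail_cons, Matrix.head_cons] at h2
        exact_mod_cast h2
    · rw [Fin.sum_univ_three]
      simp only [Matrix.cons_val_zero, Matrix.cons_val_one, Matrix.head_cons,
        Matrix.cons_val_two, Matrix.tail_cons, Rat.smul_def]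
      push_cast
      linarith [h]
  set a := astar / Real.log 5 with hadef
  set b := bstar / Real.log 7 with hbdef
  set ε' := min (δ / (2 * Real.log 5)) (min (δ / (2 * Real.log 7)) (1 / 4)) with hε'def
  have hε'pos : 0 < ε' :=
    lt_min (by positivity) (lt_min (by positivity) (by norm_num))
  have hε'4 : ε' ≤ 1 / 4 := le_trans (min_le_right _ _) (min_le_right _ _)
  have hε'5 : ε' ≤ δ / (2 * Real.log 5) := min_le_left _ _
  have hε'7 : ε' ≤ δ / (2 * Real.log 7) := le_trans (min_le_right _ _) (min_le_left _ _)
  obtain ⟨N₁, hN₁⟩ := exists_nat_gt ((|a| + 1) / θ₁ + (|b| + 1) / θ₂ + N + 1)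
  obtain ⟨A, hAN₁, ⟨B, hB⟩, ⟨C, hC⟩⟩ := grKronecker θ₁ θ₂ hirr a b ε' hε'pos hε'4 N₁
  have hAreal : ((|a| + 1) / θ₁ + (|b| + 1) / θ₂ + N + 1) < (A : ℝ) :=
    lt_of_lt_of_le hN₁ (by exact_mod_cast hAN₁)
  have hq1 : (0 : ℝ) ≤ (|a| + 1) / θ₁ := by positivity
  have hq2 : (0 : ℝ) ≤ (|b| + 1) / θ₂ := by positivity
  have hNA : N < A := by
    have : (N : ℝ) < (A : ℝ) := by linarith
    exact_mod_cast this
  have hAθ₁ : |a| + 1 ≤ (A : ℝ) * θ₁ := by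
    have h3 : (|a| + 1) / θ₁ ≤ (A : ℝ) := by
      have hN0 : (0 : ℝ) ≤ (N : ℝ) := Nat.cast_nonneg N
      linarith
    calc |a| + 1 = (|a| + 1) / θ₁ * θ₁ := by field_simp
      _ ≤ (A : ℝ) * θ₁ := mul_le_mul_of_nonneg_right h3 (le_of_lt hθ₁pos)
  have hAθ₂ : |b| + 1 ≤ (A : ℝ) * θ₂ := by
    have h3 : (|b| + 1) / θ₂ ≤ (A : ℝ) := by
      have hN0 : (0 : ℝ) ≤ (N : ℝ) := Nat.cast_nonneg N
      linarith
    calc |b| + 1 = (|b| + 1) / θ₂ * θ₂ := by field_simp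
      _ ≤ (A : ℝ) * θ₂ := mul_le_mul_of_nonneg_right h3 (le_of_lt hθ₂pos)
  have hB0 : 0 ≤ B := by
    by_contra hBneg
    push_neg at hBneg
    have hBr : (B : ℝ) ≤ -1 := by
      have : B ≤ -1 := by omega
      exact_mod_cast this
    have h1 := (abs_lt.mp hB).2
    have h2 : (A : ℝ) * θ₁ - a - B ≥ 1 := by
      linarith [le_abs_self a]
    linarith
  have hC0 : 0 ≤ C := by
    by_contra hCneg
    push_neg at hCneg
    have hCr : (C : ℝ) ≤ -1 := by
      have : C ≤ -1 := by omega
      exact_mod_cast this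
    have h1 := (abs_lt.mp hC).2
    have h2 : (A : ℝ) * θ₂ - b - C ≥ 1 := by
      linarith [le_abs_self b]
    linarith
  set B' := B.toNat with hB'def
  set C' := C.toNat with hC'def
  have hB'cast : ((B' : ℕ) : ℝ) = (B : ℝ) := by
    rw [hB'def]
    exact_mod_cast congrArg (Int.cast : ℤ → ℝ) (Int.toNat_of_nonneg hB0)
  have hC'cast : ((C' : ℕ) : ℝ) = (C : ℝ) := by
    rw [hC'def]
    exact_mod_cast congrArg (Int.cast : ℤ → ℝ) (Int.toNat_of_nonneg hC0)
  set α := (A : ℝ) * Real.log 3 - (B' : ℝ) * Real.log 5 with hαdef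
  set β := (A : ℝ) * Real.log 3 - (C' : ℝ) * Real.log 7 with hβdef
  have hαstar : |α - astar| < δ / 2 := by
    have hkey : α - astar = ((A : ℝ) * θ₁ - a - B) * Real.log 5 := by
      rw [hαdef, hadef, hθ₁, hB'cast]
      field_simp
      ring
    rw [hkey, abs_mul, abs_of_pos hl5]
    calc |(A : ℝ) * θ₁ - a - B| * Real.log 5 < ε' * Real.log 5 :=
          mul_lt_mul_of_pos_right hB hl5
      _ ≤ δ / (2 * Real.log 5) * Real.log 5 :=
          mul_le_mul_of_nonneg_right hε'5 (le_of_lt hl5)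
      _ = δ / 2 := by field_simp
  have hβstar : |β - bstar| < δ / 2 := by
    have hkey : β - bstar = ((A : ℝ) * θ₂ - b - C) * Real.log 7 := by
      rw [hβdef, hbdef, hθ₂, hC'cast]
      field_simp
      ring
    rw [hkey, abs_mul, abs_of_pos hl7]
    calc |(A : ℝ) * θ₂ - b - C| * Real.log 7 < ε' * Real.log 7 :=
          mul_lt_mul_of_pos_right hC hl7
      _ ≤ δ / (2 * Real.log 7) * Real.log 7 :=
          mul_le_mul_of_nonneg_right hε'7 (le_of_lt hl7)
      _ = δ / 2 := by field_simp
  have hdist : dist ((α, β) : ℝ × ℝ) (astar, bstar) < δ := by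
    rw [Prod.dist_eq]
    apply max_lt
    · rw [Real.dist_eq]; linarith
    · rw [Real.dist_eq]; linarith
  have hGdist := hδ (α, β) hdist
  have hGnorm : ‖G (α, β)‖ = 1 := by
    rw [hGdef]
    simp only []
    rw [norm_smul, norm_inv, Real.norm_eq_abs, abs_of_pos (hwnorm _),
      inv_mul_cancel₀ (hwnorm _).ne']
  set z' : Metric.sphere (0 : E) 1 := ⟨G (α, β), by rw [mem_sphere_zero_iff_norm]; exact hGnorm⟩
    with hz'def
  have hz'S : z' ∈ S := by
    apply hball
    rw [Metric.mem_ball, Subtype.dist_eq]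
    exact hGdist
  obtain ⟨y, hyne, hy0, hy1, hy2, hyeq⟩ := hz'S
  have hynorm : 0 < ‖y - x‖ := norm_pos_iff.mpr (sub_ne_zero.mpr hyne)
  set ρ := ‖y - x‖ * ‖w (α, β)‖⁻¹ with hρdef
  have hρpos : 0 < ρ := by
    have := hwnorm (α, β)
    positivity
  have hyx : ∀ i, y i + 1 = ρ * w (α, β) i := by
    intro i
    have h1 : (z' : E) i = ‖y - x‖⁻¹ * (y i + 1) := hcoord y z' hyeq i
    have h2 : (z' : E) i = ‖w (α, β)‖⁻¹ * w (α, β) i := by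
      show G (α, β) i = _
      rw [hGdef]
      simp only []
      rw [PiLp.smul_apply, smul_eq_mul]
    have h3 := h1.symm.trans h2
    have h4 : y i + 1 = ‖y - x‖ * (‖w (α, β)‖⁻¹ * w (α, β) i) := by
      rw [← h3, ← mul_assoc, mul_inv_cancel₀ hynorm.ne', one_mul]
    rw [h4, hρdef]
    ring
  have hw0 : w (α, β) 0 = 1 := (hwapp _).1
  have hw1 : w (α, β) 1 = Real.exp α := (hwapp _).2.1
  have hw2 : w (α, β) 2 = Real.exp β := (hwapp _).2.2
  have hexpα : Real.exp α = 3 ^ A / 5 ^ B' := by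
    rw [hαdef, Real.exp_sub, Real.exp_nat_mul, Real.exp_nat_mul,
      Real.exp_log (by norm_num : (0:ℝ) < 3), Real.exp_log (by norm_num : (0:ℝ) < 5)]
  have hexpβ : Real.exp β = 3 ^ A / 7 ^ C' := by
    rw [hβdef, Real.exp_sub, Real.exp_nat_mul, Real.exp_nat_mul,
      Real.exp_log (by norm_num : (0:ℝ) < 3), Real.exp_log (by norm_num : (0:ℝ) < 7)]
  set sR := ρ * 3 ^ A with hsRdef
  -- base 3
  obtain ⟨d3, hd3mem, hd3sum⟩ := hy0
  have hd3 : ∀ i, d3 i ≤ 1 := by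
    intro i
    have := hd3mem i
    simp only [Set.mem_insert_iff, Set.mem_singleton_iff] at this
    omega
  have hy0v : y 0 + 1 = ρ := by
    have := hyx 0
    rwa [hw0, mul_one] at this
  have hs3 : sR = ((3 : ℕ) : ℝ) ^ A * (1 + ∑' i : ℕ, (d3 i : ℝ) / ((3 : ℕ) : ℝ) ^ (i + 1)) := by
    rw [← hd3sum, hsRdef, ← hy0v]
    push_cast
    ring
  obtain ⟨h3res, h3ge⟩ := grDigitFloor 3 1 A (by norm_num) (by norm_num) d3 hd3 sR hs3
  -- base 5
  obtain ⟨d5, hd5mem, hd5sum⟩ := hy1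
  have hd5 : ∀ i, d5 i ≤ 2 := by
    intro i
    have := hd5mem i
    simp only [Set.mem_insert_iff, Set.mem_singleton_iff] at this
    omega
  have hy1v : y 1 + 1 = sR / 5 ^ B' := by
    have h := hyx 1
    rw [hw1, hexpα] at h
    rw [h, hsRdef]
    ring
  have hs5 : sR = ((5 : ℕ) : ℝ) ^ B' * (1 + ∑' i : ℕ, (d5 i : ℝ) / ((5 : ℕ) : ℝ) ^ (i + 1)) := by
    rw [← hd5sum]
    push_cast
    rw [show (1 : ℝ) + y 1 = y 1 + 1 from by ring, hy1v]
    field_simp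
  obtain ⟨h5res, _⟩ := grDigitFloor 5 2 B' (by norm_num) (by norm_num) d5 hd5 sR hs5
  -- base 7
  obtain ⟨d7, hd7mem, hd7sum⟩ := hy2
  have hd7 : ∀ i, d7 i ≤ 3 := by
    intro i
    have := hd7mem i
    simp only [Set.mem_insert_iff, Set.mem_singleton_iff] at this
    omega
  have hy2v : y 2 + 1 = sR / 7 ^ C' := by
    have h := hyx 2
    rw [hw2, hexpβ] at h
    rw [h, hsRdef]
    ring
  have hs7 : sR = ((7 : ℕ) : ℝ) ^ C' * (1 + ∑' i : ℕ, (d7 i : ℝ) / ((7 : ℕ) : ℝ) ^ (i + 1)) := by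
    rw [← hd7sum]
    push_cast
    rw [show (1 : ℝ) + y 2 = y 2 + 1 from by ring, hy2v]
    field_simp
  obtain ⟨h7res, _⟩ := grDigitFloor 7 3 C' (by norm_num) (by norm_num) d7 hd7 sR hs7
  refine ⟨⌊sR⌋₊, ?_, grCoprime105 _ h3res h5res h7res⟩
  have hA3 : A < 3 ^ A := Nat.lt_pow_self (by norm_num : 1 < 3)
  omega
end

section
/- Let A₃ = {x ∈ [1/3, 2/3] : x admits a base-3 expansion using only digits 0 and 1}, A₄ = {x ∈ [1/4, 1/2] : x admits a base-4 expansion using only digits 0 and 1}, and A₅ = {x ∈ [1/5, 2/5] : x admits a base-5 expansion using only digits 0 and 1}. Then there are infinitely many positive integers k for which there exist x ∈ A₃, y ∈ A₄, z ∈ A₅ satisfying x + 4^{1 − {k·log 3/log 4}} · y = 5^{1 − {k·log 3/log 5}} · z, where {t} denotes the fractional part of the real number t. -/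
open Finset

lemma geom3 (e : ℕ) : 2 * (∑ i ∈ Finset.range e, 3^i) + 1 = 3^e := by
  induction e with
  | zero => simp
  | succ e ih => rw [Finset.sum_range_succ, pow_succ]; omega

lemma geom4 (e : ℕ) : 3 * (∑ i ∈ Finset.range e, 4^i) + 1 = 4^e := by
  induction e with
  | zero => simp
  | succ e ih => rw [Finset.sum_range_succ, pow_succ]; omega

lemma geom5 (e : ℕ) : 4 * (∑ i ∈ Finset.range e, 5^i) + 1 = 5^e := by
  induction e with
  | zero => simp
  | succ e ih => rw [Finset.sum_range_succ, pow_succ]; omega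


lemma rep_aux : ∀ (fuel K M N T : ℕ), K + M + N ≤ fuel →
    4^M ≤ 4*3^K → 5^N ≤ 5*3^K → 3^K ≤ 3*4^M → 5^N ≤ 5*4^M → 3^K ≤ 3*5^N → 4^M ≤ 4*5^N →
    12*T + 13 ≤ 6*3^K + 4*4^M + 3*5^N →
    ∃ s3 s4 s5 : Finset ℕ, s3 ⊆ range K ∧ s4 ⊆ range M ∧ s5 ⊆ range N ∧
      T = ∑ i ∈ s3, 3^i + ∑ i ∈ s4, 4^i + ∑ i ∈ s5, 5^i := by
  intro fuel
  induction fuel with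
  | zero =>
    intro K M N T hf _ _ _ _ _ _ hT
    have hK : K = 0 := by omega
    have hM : M = 0 := by omega
    have hN : N = 0 := by omega
    subst hK; subst hM; subst hN
    have : T = 0 := by simp at hT; omega
    exact ⟨∅, ∅, ∅, by simp, by simp, by simp, by simp [this]⟩
  | succ fuel ih =>
    intro K M N T hf j1 j2 j3 j4 j5 j6 hT
    by_cases h0 : K = 0 ∧ M = 0 ∧ N = 0
    · obtain ⟨hK, hM, hN⟩ := h0
      subst hK; subst hM; subst hN
      have : T = 0 := by simp at hT; omega
      exact ⟨∅, ∅, ∅, by simp, by simp, by simp, by simp [this]⟩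
    have hcond : (1 ≤ K ∧ 4^M ≤ 4*3^(K-1) ∧ 5^N ≤ 5*3^(K-1)) ∨
        (1 ≤ M ∧ 3^K ≤ 3*4^(M-1) ∧ 5^N ≤ 5*4^(M-1)) ∨
        (1 ≤ N ∧ 3^K ≤ 3*5^(N-1) ∧ 4^M ≤ 4*5^(N-1)) := by
      have p3 : ∀ a : ℕ, 1 ≤ 3^a := fun a => Nat.one_le_pow a 3 (by norm_num)
      have p4 : ∀ a : ℕ, 1 ≤ 4^a := fun a => Nat.one_le_pow a 4 (by norm_num)
      have p5 : ∀ a : ℕ, 1 ≤ 5^a := fun a => Nat.one_le_pow a 5 (by norm_num)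
      rcases K with _ | K' <;> rcases M with _ | M' <;> rcases N with _ | N'
      · exact absurd ⟨rfl, rfl, rfl⟩ h0
      · refine Or.inr (Or.inr ⟨by omega, ?_, ?_⟩) <;>
          · simp only [Nat.add_sub_cancel]
            have := p5 N'; omega
      · refine Or.inr (Or.inl ⟨by omega, ?_, ?_⟩) <;>
          · simp only [Nat.add_sub_cancel]
            have := p4 M'; omega
      · rcases le_total (5^N') (4^M') with h | h
        · refine Or.inr (Or.inl ⟨by omega, ?_, ?_⟩) <;> simp only [Nat.add_sub_cancel]
          · have := p4 M'; omega
          · have e := pow_succ 5 N'; omega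
        · refine Or.inr (Or.inr ⟨by omega, ?_, ?_⟩) <;> simp only [Nat.add_sub_cancel]
          · have := p5 N'; omega
          · have e := pow_succ 4 M'; omega
      · refine Or.inl ⟨by omega, ?_, ?_⟩ <;>
          · simp only [Nat.add_sub_cancel]
            have := p3 K'; omega
      · rcases le_total (5^N') (3^K') with h | h
        · refine Or.inl ⟨by omega, ?_, ?_⟩ <;> simp only [Nat.add_sub_cancel]
          · have := p3 K'; omega
          · have e := pow_succ 5 N'; omega
        · refine Or.inr (Or.inr ⟨by omega, ?_, ?_⟩) <;> simp only [Nat.add_sub_cancel]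
          · have e := pow_succ 3 K'; omega
          · have := p5 N'; omega
      · rcases le_total (4^M') (3^K') with h | h
        · refine Or.inl ⟨by omega, ?_, ?_⟩ <;> simp only [Nat.add_sub_cancel]
          · have e := pow_succ 4 M'; omega
          · have := p3 K'; omega
        · refine Or.inr (Or.inl ⟨by omega, ?_, ?_⟩) <;> simp only [Nat.add_sub_cancel]
          · have e := pow_succ 3 K'; omega
          · have := p4 M'; omega
      · rcases le_total (4^M') (3^K') with h34 | h34 <;> rcases le_total (5^N') (3^K') with h35 | h35
        · refine Or.inl ⟨by omega, ?_, ?_⟩ <;> simp only [Nat.add_sub_cancel]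
          · have e := pow_succ 4 M'; omega
          · have e := pow_succ 5 N'; omega
        · rcases le_total (4^M') (5^N') with h45 | h45
          · refine Or.inr (Or.inr ⟨by omega, ?_, ?_⟩) <;> simp only [Nat.add_sub_cancel]
            · have e := pow_succ 3 K'; omega
            · have e := pow_succ 4 M'; omega
          · refine Or.inr (Or.inl ⟨by omega, ?_, ?_⟩) <;> simp only [Nat.add_sub_cancel]
            · have e := pow_succ 3 K'; omega
            · have e := pow_succ 5 N'; omega
        · rcases le_total (5^N') (4^M') with h45 | h45
          · refine Or.inr (Or.inl ⟨by omega, ?_, ?_⟩) <;> simp only [Nat.add_sub_cancel]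
            · have e := pow_succ 3 K'; omega
            · have e := pow_succ 5 N'; omega
          · refine Or.inr (Or.inr ⟨by omega, ?_, ?_⟩) <;> simp only [Nat.add_sub_cancel]
            · have e := pow_succ 3 K'; omega
            · have e := pow_succ 4 M'; omega
        · rcases le_total (5^N') (4^M') with h45 | h45
          · refine Or.inr (Or.inl ⟨by omega, ?_, ?_⟩) <;> simp only [Nat.add_sub_cancel]
            · have e := pow_succ 3 K'; omega
            · have e := pow_succ 5 N'; omega
          · refine Or.inr (Or.inr ⟨by omega, ?_, ?_⟩) <;> simp only [Nat.add_sub_cancel]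
            · have e := pow_succ 3 K'; omega
            · have e := pow_succ 4 M'; omega
    rcases hcond with ⟨hK1, c1, c2⟩ | ⟨hM1, c1, c2⟩ | ⟨hN1, c1, c2⟩
    · -- strip top power of 3
      obtain ⟨K', rfl⟩ : ∃ K', K = K' + 1 := ⟨K - 1, by omega⟩
      simp only [Nat.add_sub_cancel] at c1 c2
      have e3 : (3:ℕ)^(K'+1) = 3 * 3^K' := by rw [pow_succ]; ring
      have hd1 : 3^K' ≤ 3*4^M := by omega
      have hd2 : 3^K' ≤ 3*5^N := by omega
      have hsub : range K' ⊆ range (K'+1) := Finset.range_subset_range.mpr (Nat.le_succ K')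
      by_cases hT3 : 3^K' ≤ T
      · obtain ⟨s3, s4, s5, hs3, hs4, hs5, hsum⟩ :=
          ih K' M N (T - 3^K') (by omega) c1 c2 hd1 j4 hd2 j6 (by omega)
        have hK'ns3 : K' ∉ s3 := fun h => by have := Finset.mem_range.mp (hs3 h); omega
        refine ⟨insert K' s3, s4, s5, ?_, hs4, hs5, ?_⟩
        · exact Finset.insert_subset (Finset.mem_range.mpr (by omega)) (hs3.trans hsub)
        · rw [Finset.sum_insert hK'ns3]; omega
      · obtain ⟨s3, s4, s5, hs3, hs4, hs5, hsum⟩ :=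
          ih K' M N T (by omega) c1 c2 hd1 j4 hd2 j6 (by omega)
        exact ⟨s3, s4, s5, hs3.trans hsub, hs4, hs5, hsum⟩
    · -- strip top power of 4
      obtain ⟨M', rfl⟩ : ∃ M', M = M' + 1 := ⟨M - 1, by omega⟩
      simp only [Nat.add_sub_cancel] at c1 c2
      have e4 : (4:ℕ)^(M'+1) = 4 * 4^M' := by rw [pow_succ]; ring
      have hd1 : 4^M' ≤ 4*3^K := by omega
      have hd2 : 4^M' ≤ 4*5^N := by omega
      have hsub : range M' ⊆ range (M'+1) := Finset.range_subset_range.mpr (Nat.le_succ M')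
      by_cases hT4 : 4^M' ≤ T
      · obtain ⟨s3, s4, s5, hs3, hs4, hs5, hsum⟩ :=
          ih K M' N (T - 4^M') (by omega) hd1 j2 c1 c2 j5 hd2 (by omega)
        have hns : M' ∉ s4 := fun h => by have := Finset.mem_range.mp (hs4 h); omega
        refine ⟨s3, insert M' s4, s5, hs3, ?_, hs5, ?_⟩
        · exact Finset.insert_subset (Finset.mem_range.mpr (by omega)) (hs4.trans hsub)
        · rw [Finset.sum_insert hns]; omega
      · obtain ⟨s3, s4, s5, hs3, hs4, hs5, hsum⟩ :=
          ih K M' N T (by omega) hd1 j2 c1 c2 j5 hd2 (by omega)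
        exact ⟨s3, s4, s5, hs3, hs4.trans hsub, hs5, hsum⟩
    · -- strip top power of 5
      obtain ⟨N', rfl⟩ : ∃ N', N = N' + 1 := ⟨N - 1, by omega⟩
      simp only [Nat.add_sub_cancel] at c1 c2
      have e5 : (5:ℕ)^(N'+1) = 5 * 5^N' := by rw [pow_succ]; ring
      have hd1 : 5^N' ≤ 5*3^K := by omega
      have hd2 : 5^N' ≤ 5*4^M := by omega
      have hsub : range N' ⊆ range (N'+1) := Finset.range_subset_range.mpr (Nat.le_succ N')
      by_cases hT5 : 5^N' ≤ T
      · obtain ⟨s3, s4, s5, hs3, hs4, hs5, hsum⟩ :=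
          ih K M N' (T - 5^N') (by omega) j1 hd1 j3 hd2 c1 c2 (by omega)
        have hns : N' ∉ s5 := fun h => by have := Finset.mem_range.mp (hs5 h); omega
        refine ⟨s3, s4, insert N' s5, hs3, hs4, ?_, ?_⟩
        · exact Finset.insert_subset (Finset.mem_range.mpr (by omega)) (hs5.trans hsub)
        · rw [Finset.sum_insert hns]; omega
      · obtain ⟨s3, s4, s5, hs3, hs4, hs5, hsum⟩ :=
          ih K M N' T (by omega) j1 hd1 j3 hd2 c1 c2 (by omega)
        exact ⟨s3, s4, s5, hs3, hs4, hs5.trans hsub, hsum⟩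



lemma mem_digitSet_aux (b e : ℕ) (hb : 1 < b) (s : Finset ℕ) (hs : ∀ i ∈ s, i < e) :
    ((b^e + ∑ i ∈ s, b^i : ℕ) : ℝ) / (b:ℝ)^(e+1) ∈ digitSet b {0,1} := by
  classical
  have hb0 : (0:ℝ) < (b:ℝ) := by
    have : 0 < b := by omega
    exact_mod_cast this
  set F : Finset ℕ := insert 0 (s.image fun i => e - i) with hF
  have h0F : 0 ∉ s.image fun i => e - i := by
    simp only [Finset.mem_image, not_exists]
    rintro i ⟨hi, h⟩
    have := hs i hi; omega
  refine ⟨fun j => if j ∈ F then 1 else 0, ?_, ?_⟩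
  · intro i
    by_cases h : i ∈ F <;> simp [h]
  · have hzero : ∀ j ∉ F, ((if j ∈ F then (1:ℕ) else 0) : ℝ) / (b:ℝ)^(j+1) = 0 := by
      intro j hj; simp [hj]
    beta_reduce
    simp only [Nat.cast_ite, Nat.cast_one, Nat.cast_zero]
    have hzero' : ∀ j ∉ F, ((if j ∈ F then (1:ℝ) else 0)) / (b:ℝ)^(j+1) = 0 := by
      intro j hj; simp [hj]
    rw [tsum_eq_sum hzero']
    have hterm : ∀ j ∈ F, ((if j ∈ F then (1:ℝ) else 0)) / (b:ℝ)^(j+1) = 1/(b:ℝ)^(j+1) := by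
      intro j hj; simp [hj]
    rw [Finset.sum_congr rfl hterm, hF, Finset.sum_insert h0F, Finset.sum_image]
    · push_cast
      rw [add_div, Finset.sum_div]
      congr 1
      · field_simp
        rw [pow_succ]
      · refine Finset.sum_congr rfl fun i hi => ?_
        have hie : i < e := hs i hi
        have hexp : i + (e - i + 1) = e + 1 := by omega
        rw [div_eq_div_iff (by positivity) (by positivity), one_mul, ← pow_add, hexp]
    · intro i hi j hj hij
      have := hs i hi; have := hs j hj; simp only at hij; omega


lemma coeff_eq (b X : ℝ) (hb : 1 < b) (hX : 0 < X) (m : ℕ)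
    (h1 : b^m ≤ X) (h2 : X < b^(m+1)) :
    b ^ (1 - Int.fract (Real.log X / Real.log b)) = b^(m+1) / X := by
  have hb0 : (0:ℝ) < b := lt_trans one_pos hb
  have hlb : 0 < Real.log b := Real.log_pos hb
  have hfl : ⌊Real.log X / Real.log b⌋ = (m:ℤ) := by
    rw [Int.floor_eq_iff]
    constructor
    · rw [le_div_iff₀ hlb]
      push_cast
      calc (m:ℝ) * Real.log b = Real.log (b^m) := by rw [Real.log_pow]
        _ ≤ Real.log X := Real.log_le_log (by positivity) h1
    · rw [div_lt_iff₀ hlb]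
      push_cast
      calc Real.log X < Real.log (b^(m+1)) := Real.log_lt_log hX h2
        _ = ((m:ℝ)+1) * Real.log b := by rw [Real.log_pow]; push_cast; ring
  have harg : (1 : ℝ) - Int.fract (Real.log X / Real.log b)
      = ((m+1:ℕ):ℝ) - Real.log X / Real.log b := by
    rw [Int.fract, hfl]
    push_cast
    ring
  rw [harg, Real.rpow_sub hb0, Real.rpow_natCast]
  congr 1
  have : Real.log X / Real.log b = Real.logb b X := by rw [Real.logb]
  rw [this, Real.rpow_logb hb0 (by linarith) hX]


lemma rpow_base_bound (b : ℝ) (hb : (2:ℝ) ≤ b) (hble : b ≤ (26/25:ℝ)^(52:ℕ)) :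
    b ^ ((1:ℝ)/52) ≤ 26/25 := by
  have h1 : (0:ℝ) ≤ b := by linarith
  calc b ^ ((1:ℝ)/52) ≤ ((26/25:ℝ)^(52:ℕ)) ^ ((1:ℝ)/52) :=
        Real.rpow_le_rpow h1 hble (by norm_num)
    _ = 26/25 := by
        rw [← Real.rpow_natCast (26/25 : ℝ) 52, ← Real.rpow_mul (by norm_num)]
        norm_num

lemma bounds_of_close (c : ℝ) (hc : (2:ℝ) ≤ c) (hc52 : c ≤ (26/25:ℝ)^(52:ℕ))
    (q : ℕ) (P : ℤ) (hP : 0 < P)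
    (h : |(q:ℝ) * (Real.log 3 / Real.log c) - (P:ℝ)| ≤ 1/52) :
    25 * c^(P.toNat) ≤ 26 * (3:ℝ)^q ∧ 25 * (3:ℝ)^q ≤ 26 * c^(P.toNat) := by
  have hc0 : (0:ℝ) < c := by linarith
  have hc1 : (1:ℝ) < c := by linarith
  have hlc : 0 < Real.log c := Real.log_pos hc1
  have key : (3:ℝ)^q = c ^ ((q:ℝ) * (Real.log 3 / Real.log c)) := by
    rw [Real.rpow_def_of_pos hc0]
    have harg : Real.log c * ((q:ℝ) * (Real.log 3 / Real.log c)) = (q:ℝ) * Real.log 3 := by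
      field_simp
    rw [harg, Real.exp_nat_mul, Real.exp_log (by norm_num)]
  have h52 : c ^ ((1:ℝ)/52) ≤ 26/25 := rpow_base_bound c hc hc52
  have hPn : ((P.toNat : ℕ) : ℝ) = (P : ℝ) := by
    have : (P.toNat : ℤ) = P := Int.toNat_of_nonneg hP.le
    exact_mod_cast congrArg (Int.cast : ℤ → ℝ) this
  have habs := abs_le.mp h
  constructor
  · have h1 : c ^ ((P:ℝ) - 1/52) ≤ (3:ℝ)^q := by
      rw [key]
      exact Real.rpow_le_rpow_left_iff hc1 |>.mpr (by linarith [habs.2])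
    have h2 : c ^ ((P:ℝ) - 1/52) = c ^ (P.toNat) / c ^ ((1:ℝ)/52) := by
      rw [Real.rpow_sub hc0, ← hPn, Real.rpow_natCast]
    have h3 : (0:ℝ) < c ^ ((1:ℝ)/52) := Real.rpow_pos_of_pos hc0 _
    rw [h2] at h1
    have h4 : c ^ (P.toNat) / (26/25 : ℝ) ≤ c ^ (P.toNat) / c ^ ((1:ℝ)/52) :=
      div_le_div_of_nonneg_left (by positivity) h3 h52
    nlinarith [le_trans h4 h1]
  · have h1 : (3:ℝ)^q ≤ c ^ ((P:ℝ) + 1/52) := by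
      rw [key]
      exact Real.rpow_le_rpow_left_iff hc1 |>.mpr (by linarith [habs.1])
    have h2 : c ^ ((P:ℝ) + 1/52) = c ^ (P.toNat) * c ^ ((1:ℝ)/52) := by
      rw [Real.rpow_add hc0, ← hPn, Real.rpow_natCast]
    rw [h2] at h1
    have h5 : (0:ℝ) ≤ c ^ (P.toNat) := by positivity
    nlinarith [mul_le_mul_of_nonneg_left h52 h5]

lemma floor_close {u v : ℝ} (h : ⌊(52:ℝ) * u⌋ = ⌊(52:ℝ) * v⌋) : |u - v| < 1/52 := by
  have h1 := Int.floor_le ((52:ℝ) * u)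
  have h2 := Int.lt_floor_add_one ((52:ℝ) * u)
  have h3 := Int.floor_le ((52:ℝ) * v)
  have h4 := Int.lt_floor_add_one ((52:ℝ) * v)
  rw [h] at h1 h2
  rw [abs_lt]
  constructor <;> linarith

lemma approx (N : ℕ) : ∃ q p s : ℕ, N < q ∧
    25 * 4^p ≤ 26 * 3^q ∧ 25 * 3^q ≤ 26 * 4^p ∧
    25 * 5^s ≤ 26 * 3^q ∧ 25 * 3^q ≤ 26 * 5^s := by
  classical
  set α : ℝ := Real.log 3 / Real.log 4 with hα
  set β : ℝ := Real.log 3 / Real.log 5 with hβ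
  have hl4 : (0:ℝ) < Real.log 4 := Real.log_pos (by norm_num)
  have hl5 : (0:ℝ) < Real.log 5 := Real.log_pos (by norm_num)
  have hl3 : (0:ℝ) < Real.log 3 := Real.log_pos (by norm_num)
  have hαhalf : 1/2 < α := by
    rw [hα, lt_div_iff₀ hl4]
    have h9 : (2:ℝ) * Real.log 3 = Real.log 9 := by
      rw [show (9:ℝ) = 3^(2:ℕ) by norm_num, Real.log_pow]; push_cast; ring
    have : Real.log 4 < Real.log 9 := Real.log_lt_log (by norm_num) (by norm_num)
    linarith
  have hβhalf : 1/2 < β := by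
    rw [hβ, lt_div_iff₀ hl5]
    have h9 : (2:ℝ) * Real.log 3 = Real.log 9 := by
      rw [show (9:ℝ) = 3^(2:ℕ) by norm_num, Real.log_pow]; push_cast; ring
    have : Real.log 5 < Real.log 9 := Real.log_lt_log (by norm_num) (by norm_num)
    linarith
  set f : ℕ → ℕ × ℕ := fun t =>
    (⌊52 * Int.fract ((((N+1)*t : ℕ) : ℝ) * α)⌋.toNat,
     ⌊52 * Int.fract ((((N+1)*t : ℕ) : ℝ) * β)⌋.toNat) with hfdef
  have hmaps : ∀ t ∈ Finset.range 2705, f t ∈ Finset.range 52 ×ˢ Finset.range 52 := by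
    intro t _
    have key : ∀ u : ℝ, ⌊(52:ℝ) * Int.fract u⌋.toNat < 52 := by
      intro u
      have h1 : Int.fract u < 1 := Int.fract_lt_one u
      have : ⌊(52:ℝ) * Int.fract u⌋ < 52 := by
        apply Int.floor_lt.mpr
        push_cast
        linarith
      omega
    simp only [Finset.mem_product, Finset.mem_range]
    exact ⟨key _, key _⟩
  have hcard : (Finset.range 52 ×ˢ Finset.range 52).card < (Finset.range 2705).card := by simp
  obtain ⟨t₁, ht₁, t₂, ht₂, hne, hfeq⟩ :=
    Finset.exists_ne_map_eq_of_card_lt_of_maps_to hcard hmaps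
  wlog hlt : t₁ < t₂ generalizing t₁ t₂
  · exact this t₂ ht₂ t₁ ht₁ hne.symm hfeq.symm (by omega)
  set j₁ : ℕ := (N+1)*t₁ with hj₁
  set j₂ : ℕ := (N+1)*t₂ with hj₂
  have hj : j₁ < j₂ := (Nat.mul_lt_mul_left (by omega)).mpr hlt
  set q : ℕ := j₂ - j₁ with hq
  have hq1 : 1 ≤ q := by omega
  have hqN : N < q := by
    have h1 : (N+1)*(t₁+1) ≤ j₂ := Nat.mul_le_mul_left _ (by omega)
    have h2 : (N+1)*(t₁+1) = j₁ + (N+1) := by rw [hj₁, Nat.mul_succ]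
    omega
  have hqcast : ((q:ℕ):ℝ) = (j₂:ℝ) - (j₁:ℝ) := by
    rw [hq]; push_cast [Nat.cast_sub hj.le]; ring
  -- fractional part closeness
  have hfl4 : ⌊52 * Int.fract ((j₁:ℝ) * α)⌋ = ⌊52 * Int.fract ((j₂:ℝ) * α)⌋ := by
    have h1 := congrArg Prod.fst hfeq
    simp only [hfdef] at h1
    rw [← hj₁, ← hj₂] at h1
    have n1 : 0 ≤ ⌊52 * Int.fract ((j₁:ℝ) * α)⌋ :=
      Int.floor_nonneg.mpr (mul_nonneg (by norm_num) (Int.fract_nonneg _))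
    have n2 : 0 ≤ ⌊52 * Int.fract ((j₂:ℝ) * α)⌋ :=
      Int.floor_nonneg.mpr (mul_nonneg (by norm_num) (Int.fract_nonneg _))
    omega
  have hfl5 : ⌊52 * Int.fract ((j₁:ℝ) * β)⌋ = ⌊52 * Int.fract ((j₂:ℝ) * β)⌋ := by
    have h1 := congrArg Prod.snd hfeq
    simp only [hfdef] at h1
    rw [← hj₁, ← hj₂] at h1
    have n1 : 0 ≤ ⌊52 * Int.fract ((j₁:ℝ) * β)⌋ :=
      Int.floor_nonneg.mpr (mul_nonneg (by norm_num) (Int.fract_nonneg _))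
    have n2 : 0 ≤ ⌊52 * Int.fract ((j₂:ℝ) * β)⌋ :=
      Int.floor_nonneg.mpr (mul_nonneg (by norm_num) (Int.fract_nonneg _))
    omega
  -- the integer approximants
  set P : ℤ := ⌊(j₂:ℝ) * α⌋ - ⌊(j₁:ℝ) * α⌋ with hP
  set S : ℤ := ⌊(j₂:ℝ) * β⌋ - ⌊(j₁:ℝ) * β⌋ with hS
  have hPdiff : (q:ℝ) * α - (P:ℝ) = Int.fract ((j₂:ℝ)*α) - Int.fract ((j₁:ℝ)*α) := by
    rw [Int.fract, Int.fract, hP, hqcast]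
    push_cast
    ring
  have hSdiff : (q:ℝ) * β - (S:ℝ) = Int.fract ((j₂:ℝ)*β) - Int.fract ((j₁:ℝ)*β) := by
    rw [Int.fract, Int.fract, hS, hqcast]
    push_cast
    ring
  have hPclose : |(q:ℝ) * α - (P:ℝ)| ≤ 1/52 := by
    rw [hPdiff]
    exact le_of_lt (by simpa [abs_sub_comm] using floor_close hfl4)
  have hSclose : |(q:ℝ) * β - (S:ℝ)| ≤ 1/52 := by
    rw [hSdiff]
    exact le_of_lt (by simpa [abs_sub_comm] using floor_close hfl5)
  have hq1R : (1:ℝ) ≤ (q:ℝ) := Nat.one_le_cast.mpr hq1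
  have hqα : (1:ℝ)/2 < (q:ℝ) * α :=
    lt_of_lt_of_le hαhalf (by
      calc α = 1 * α := (one_mul α).symm
        _ ≤ (q:ℝ) * α := mul_le_mul_of_nonneg_right hq1R (by linarith))
  have hqβ : (1:ℝ)/2 < (q:ℝ) * β :=
    lt_of_lt_of_le hβhalf (by
      calc β = 1 * β := (one_mul β).symm
        _ ≤ (q:ℝ) * β := mul_le_mul_of_nonneg_right hq1R (by linarith))
  have hPpos : 0 < P := by
    have := abs_le.mp hPclose
    have hcast : (0:ℝ) < (P:ℝ) := by linarith
    exact Int.cast_pos.mp hcast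
  have hSpos : 0 < S := by
    have := abs_le.mp hSclose
    have hcast : (0:ℝ) < (S:ℝ) := by linarith
    exact Int.cast_pos.mp hcast
  obtain ⟨b4a, b4b⟩ := bounds_of_close 4 (by norm_num) (by norm_num) q P hPpos hPclose
  obtain ⟨b5a, b5b⟩ := bounds_of_close 5 (by norm_num) (by norm_num) q S hSpos hSclose
  refine ⟨q, P.toNat, S.toNat, hqN, ?_, ?_, ?_, ?_⟩
  · exact_mod_cast b4a
  · exact_mod_cast b4b
  · exact_mod_cast b5a
  · exact_mod_cast b5b


section helpers

lemma mem_digitSet_aux' (b e : ℕ) (hb : 1 < b) (s : Finset ℕ) (hs : ∀ i ∈ s, i < e)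
    (r : ℝ) (hr : r = ((b^e + ∑ i ∈ s, b^i : ℕ) : ℝ) / (b:ℝ)^(e+1)) :
    r ∈ digitSet b {0,1} := by
  rw [hr]; exact mem_digitSet_aux b e hb s hs

section helpers

lemma exp_facts (q p s : ℕ) :
    (3:ℕ)^(q+2) = 9 * 3^q ∧ (3:ℕ)^(q+3) = 27 * 3^q ∧
    (4:ℕ)^(p+2) = 16 * 4^p ∧ (4:ℕ)^(p+3) = 64 * 4^p ∧
    (5:ℕ)^(s+2) = 25 * 5^s ∧ (5:ℕ)^(s+3) = 125 * 5^s := by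
  refine ⟨?_, ?_, ?_, ?_, ?_, ?_⟩ <;> (rw [pow_add]; ring)

lemma nat_facts (q p s : ℕ)
    (G1 : 25 * 4^p ≤ 26 * 3^q) (G2 : 25 * 3^q ≤ 26 * 4^p)
    (G3 : 25 * 5^s ≤ 26 * 3^q) (G4 : 25 * 3^q ≤ 26 * 5^s) :
    (4^(p+2) ≤ 3^(q+3)) ∧ (3^(q+3) < 4^(p+3)) ∧ (5^(s+2) ≤ 3^(q+3)) ∧ (3^(q+3) < 5^(s+3)) ∧
    (4*3^(q+2) + 4*4^(p+2) + 1 ≤ 5^(s+3)) ∧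
    (4^(p+2) ≤ 4*3^(q+2)) ∧ (5^(s+2) ≤ 5*3^(q+2)) ∧ (3^(q+2) ≤ 3*4^(p+2)) ∧
    (5^(s+2) ≤ 5*4^(p+2)) ∧ (3^(q+2) ≤ 3*5^(s+2)) ∧ (4^(p+2) ≤ 4*5^(s+2)) := by
  have h3q : 1 ≤ 3^q := Nat.one_le_pow _ _ (by norm_num)
  have h4p : 1 ≤ 4^p := Nat.one_le_pow _ _ (by norm_num)
  have h5s : 1 ≤ 5^s := Nat.one_le_pow _ _ (by norm_num)
  obtain ⟨e1, e2, e3, e4, e5, e6⟩ := exp_facts q p s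
  refine ⟨?_, ?_, ?_, ?_, ?_, ?_, ?_, ?_, ?_, ?_, ?_⟩ <;> omega

lemma Tdef (q p s c4 : ℕ) (hc4 : 5^(s+3) - 1 = 4*c4)
    (C1 : 4*3^(q+2) + 4*4^(p+2) + 1 ≤ 5^(s+3)) :
    (5:ℕ)^(s+3) = 4*(c4 - 3^(q+2) - 4^(p+2)) + 4*3^(q+2) + 4*4^(p+2) + 1 := by
  have h5 : 1 ≤ (5:ℕ)^(s+3) := Nat.one_le_pow _ _ (by norm_num)
  omega

lemma bound_fact (q p s T : ℕ)
    (G1 : 25 * 4^p ≤ 26 * 3^q) (G2 : 25 * 3^q ≤ 26 * 4^p)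
    (G3 : 25 * 5^s ≤ 26 * 3^q) (G4 : 25 * 3^q ≤ 26 * 5^s)
    (hTeq : 5^(s+3) = 4*T + 4*3^(q+2) + 4*4^(p+2) + 1) :
    12*T + 13 ≤ 6*3^(q+2) + 4*4^(p+2) + 3*5^(s+2) := by
  have h3q : 1 ≤ 3^q := Nat.one_le_pow _ _ (by norm_num)
  obtain ⟨e1, e2, e3, e4, e5, e6⟩ := exp_facts q p s
  omega

lemma abc_fact (q p s T Sa Sb Sc5 Scc R5 A B C : ℕ)
    (hTeq : 5^(s+3) = 4*T + 4*3^(q+2) + 4*4^(p+2) + 1)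
    (hsum : T = Sa + Sb + Sc5)
    (hsplit : Scc + Sc5 = R5)
    (hg5 : 4 * R5 + 1 = 5^(s+2))
    (e5succ : (5:ℕ)^(s+3) = 5 * 5^(s+2))
    (hAeq : 3^(q+2) + Sa = A) (hBeq : 4^(p+2) + Sb = B) (hCeq : 5^(s+2) + Scc = C) :
    A + B = C := by omega

lemma succ_pow3 (q : ℕ) : (3:ℕ)^(q+3) = 3 * 3^(q+2) := by
  rw [show q+3 = (q+2)+1 by omega, pow_succ]; ring
lemma succ_pow4 (p : ℕ) : (4:ℕ)^(p+3) = 4 * 4^(p+2) := by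
  rw [show p+3 = (p+2)+1 by omega, pow_succ]; ring
lemma succ_pow5 (s : ℕ) : (5:ℕ)^(s+3) = 5 * 5^(s+2) := by
  rw [show s+3 = (s+2)+1 by omega, pow_succ]; ring

lemma small_bnd (Sa R3 P : ℕ) (k : ℕ) (hle : Sa ≤ R3) (hg : k * R3 + 1 = P) :
    k * Sa + 1 ≤ P := by
  have := Nat.mul_le_mul_left k hle
  omega

lemma iccA (q Sa A : ℕ) (hAeq : 3^(q+2) + Sa = A) (hSa' : 2*Sa + 1 ≤ 3^(q+2)) :
    3^(q+3) ≤ A*3 ∧ A*3 ≤ 2*3^(q+3) := by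
  have e := succ_pow3 q
  omega

lemma iccB (p Sb B : ℕ) (hBeq : 4^(p+2) + Sb = B) (hSb' : 3*Sb + 1 ≤ 4^(p+2)) :
    4^(p+3) ≤ B*4 ∧ B*2 ≤ 1*4^(p+3) := by
  have e := succ_pow4 p
  omega

lemma iccC (s Scc C : ℕ) (hCeq : 5^(s+2) + Scc = C) (hScc' : 4*Scc + 1 ≤ 5^(s+2)) :
    5^(s+3) ≤ C*5 ∧ C*5 ≤ 2*5^(s+3) := by
  have e := succ_pow5 s
  omega

end helpers

/-- There are infinitely many positive integers `k` for which there exist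
`x ∈ A₃ = [1/3, 2/3] ∩ digitSet 3 {0,1}`, `y ∈ A₄ = [1/4, 1/2] ∩ digitSet 4 {0,1}`,
`z ∈ A₅ = [1/5, 2/5] ∩ digitSet 5 {0,1}` with
`x + 4^{1 - {k log 3 / log 4}} y = 5^{1 - {k log 3 / log 5}} z`. -/
theorem infinitely_many_plane_intersections :
    ∀ N : ℕ, ∃ k : ℕ, N < k ∧
      ∃ x ∈ Set.Icc (1 / 3 : ℝ) (2 / 3) ∩ digitSet 3 {0, 1},
      ∃ y ∈ Set.Icc (1 / 4 : ℝ) (1 / 2) ∩ digitSet 4 {0, 1},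
      ∃ z ∈ Set.Icc (1 / 5 : ℝ) (2 / 5) ∩ digitSet 5 {0, 1},
        x + (4 : ℝ) ^ (1 - Int.fract ((k : ℝ) * Real.log 3 / Real.log 4)) * y =
          (5 : ℝ) ^ (1 - Int.fract ((k : ℝ) * Real.log 3 / Real.log 5)) * z := by
  intro N
  obtain ⟨q, p, s, hqN, G1, G2, G3, G4⟩ := approx N
  obtain ⟨W4a, W4b, W5a, W5b, C1, J1, J2, J3, J4, J5, J6⟩ := nat_facts q p s G1 G2 G3 G4
  obtain ⟨c4, hc4⟩ : (4:ℕ) ∣ 5^(s+3) - 1 := by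
    simpa using Nat.sub_dvd_pow_sub_pow 5 1 (s+3)
  obtain ⟨T, hTeq⟩ : ∃ T : ℕ, 5^(s+3) = 4*T + 4*3^(q+2) + 4*4^(p+2) + 1 :=
    ⟨c4 - 3^(q+2) - 4^(p+2), Tdef q p s c4 hc4 C1⟩
  have hbound := bound_fact q p s T G1 G2 G3 G4 hTeq
  obtain ⟨s3, s4, s5, hs3, hs4, hs5, hsum⟩ :=
    rep_aux ((q+2)+(p+2)+(s+2)) (q+2) (p+2) (s+2) T le_rfl J1 J2 J3 J4 J5 J6 hbound
  obtain ⟨Sa, hSaeq⟩ : ∃ x : ℕ, ∑ i ∈ s3, 3^i = x := ⟨_, rfl⟩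
  obtain ⟨Sb, hSbeq⟩ : ∃ x : ℕ, ∑ i ∈ s4, 4^i = x := ⟨_, rfl⟩
  obtain ⟨Sc5, hSc5eq⟩ : ∃ x : ℕ, ∑ i ∈ s5, 5^i = x := ⟨_, rfl⟩
  obtain ⟨Scc, hScceq⟩ : ∃ x : ℕ, ∑ i ∈ (range (s+2) \ s5), 5^i = x := ⟨_, rfl⟩
  obtain ⟨R3, hR3⟩ : ∃ x : ℕ, ∑ i ∈ range (q+2), 3^i = x := ⟨_, rfl⟩
  obtain ⟨R4, hR4⟩ : ∃ x : ℕ, ∑ i ∈ range (p+2), 4^i = x := ⟨_, rfl⟩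
  obtain ⟨R5, hR5⟩ : ∃ x : ℕ, ∑ i ∈ range (s+2), 5^i = x := ⟨_, rfl⟩
  rw [hSaeq, hSbeq, hSc5eq] at hsum
  have hsplit : Scc + Sc5 = R5 := by
    rw [← hScceq, ← hSc5eq, ← hR5]; exact Finset.sum_sdiff hs5
  have hg5 : 4 * R5 + 1 = 5^(s+2) := by rw [← hR5]; exact geom5 (s+2)
  have hg3 : 2 * R3 + 1 = 3^(q+2) := by rw [← hR3]; exact geom3 (q+2)
  have hg4 : 3 * R4 + 1 = 4^(p+2) := by rw [← hR4]; exact geom4 (p+2)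
  obtain ⟨A, hAeq⟩ : ∃ x : ℕ, 3^(q+2) + Sa = x := ⟨_, rfl⟩
  obtain ⟨B, hBeq⟩ : ∃ x : ℕ, 4^(p+2) + Sb = x := ⟨_, rfl⟩
  obtain ⟨C, hCeq⟩ : ∃ x : ℕ, 5^(s+2) + Scc = x := ⟨_, rfl⟩
  have hABC : A + B = C :=
    abc_fact q p s T Sa Sb Sc5 Scc R5 A B C hTeq hsum hsplit hg5 (succ_pow5 s) hAeq hBeq hCeq
  have hSa' : 2*Sa + 1 ≤ 3^(q+2) :=
    small_bnd Sa R3 _ 2 (by rw [← hSaeq, ← hR3]; exact Finset.sum_le_sum_of_subset hs3) hg3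
  have hSb' : 3*Sb + 1 ≤ 4^(p+2) :=
    small_bnd Sb R4 _ 3 (by rw [← hSbeq, ← hR4]; exact Finset.sum_le_sum_of_subset hs4) hg4
  have hScc' : 4*Scc + 1 ≤ 5^(s+2) :=
    small_bnd Scc R5 _ 4
      (by rw [← hScceq, ← hR5]; exact Finset.sum_le_sum_of_subset (Finset.sdiff_subset)) hg5
  obtain ⟨hA1, hA2⟩ := iccA q Sa A hAeq hSa'
  obtain ⟨hB1, hB2⟩ := iccB p Sb B hBeq hSb'
  obtain ⟨hC1, hC2⟩ := iccC s Scc C hCeq hScc'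
  have hD : (0:ℝ) < (3:ℝ)^(q+3) := by positivity
  have hE : (0:ℝ) < (4:ℝ)^(p+3) := by positivity
  have hF : (0:ℝ) < (5:ℝ)^(s+3) := by positivity
  refine ⟨q+3, Nat.lt_of_lt_of_le hqN (Nat.le_add_right q 3), ?_⟩
  refine ⟨(A:ℝ) / (3:ℝ)^(q+3), ⟨?_, ?_⟩, (B:ℝ) / (4:ℝ)^(p+3), ⟨?_, ?_⟩,
    (C:ℝ) / (5:ℝ)^(s+3), ⟨?_, ?_⟩, ?_⟩
  · constructor
    · rw [div_le_div_iff₀ (by norm_num) hD, one_mul]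
      exact_mod_cast hA1
    · rw [div_le_div_iff₀ hD (by norm_num)]
      exact_mod_cast hA2
  · refine mem_digitSet_aux' 3 (q+2) (by norm_num) s3
      (fun i hi => Finset.mem_range.mp (hs3 hi)) _ ?_
    rw [hSaeq, hAeq]
    norm_num
  · constructor
    · rw [div_le_div_iff₀ (by norm_num) hE, one_mul]
      exact_mod_cast hB1
    · rw [div_le_div_iff₀ hE (by norm_num)]
      exact_mod_cast hB2
  · refine mem_digitSet_aux' 4 (p+2) (by norm_num) s4
      (fun i hi => Finset.mem_range.mp (hs4 hi)) _ ?_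
    rw [hSbeq, hBeq]
    norm_num
  · constructor
    · rw [div_le_div_iff₀ (by norm_num) hF, one_mul]
      exact_mod_cast hC1
    · rw [div_le_div_iff₀ hF (by norm_num)]
      exact_mod_cast hC2
  · refine mem_digitSet_aux' 5 (s+2) (by norm_num)
      (range (s+2) \ s5) (fun i hi => Finset.mem_range.mp (Finset.sdiff_subset hi)) _ ?_
    rw [hScceq, hCeq]
    norm_num
  · have hcoef4 : (4:ℝ) ^ (1 - Int.fract (((q+3:ℕ):ℝ) * Real.log 3 / Real.log 4))
        = (4:ℝ)^(p+3) / (3:ℝ)^(q+3) := by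
      have harg : ((q+3:ℕ):ℝ) * Real.log 3 / Real.log 4
          = Real.log ((3:ℝ)^(q+3)) / Real.log 4 := by rw [Real.log_pow]
      rw [harg]
      have hco := coeff_eq 4 ((3:ℝ)^(q+3)) (by norm_num) hD (p+2)
        (by exact_mod_cast W4a) (by
          have hexp : (4:ℝ)^(p+2+1) = (4:ℝ)^(p+3) := by norm_num
          rw [hexp]; exact_mod_cast W4b)
      have hexp : (4:ℝ)^(p+2+1) = (4:ℝ)^(p+3) := by norm_num
      rwa [hexp] at hco
    have hcoef5 : (5:ℝ) ^ (1 - Int.fract (((q+3:ℕ):ℝ) * Real.log 3 / Real.log 5))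
        = (5:ℝ)^(s+3) / (3:ℝ)^(q+3) := by
      have harg : ((q+3:ℕ):ℝ) * Real.log 3 / Real.log 5
          = Real.log ((3:ℝ)^(q+3)) / Real.log 5 := by rw [Real.log_pow]
      rw [harg]
      have hco := coeff_eq 5 ((3:ℝ)^(q+3)) (by norm_num) hD (s+2)
        (by exact_mod_cast W5a) (by
          have hexp : (5:ℝ)^(s+2+1) = (5:ℝ)^(s+3) := by norm_num
          rw [hexp]; exact_mod_cast W5b)
      have hexp : (5:ℝ)^(s+2+1) = (5:ℝ)^(s+3) := by norm_num
      rwa [hexp] at hco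
    rw [hcoef4, hcoef5]
    have hABCr : (A:ℝ) + (B:ℝ) = (C:ℝ) := by exact_mod_cast hABC
    have h1 : (4:ℝ)^(p+3)/(3:ℝ)^(q+3) * ((B:ℝ)/(4:ℝ)^(p+3)) = (B:ℝ)/(3:ℝ)^(q+3) := by
      field_simp
    have h2 : (5:ℝ)^(s+3)/(3:ℝ)^(q+3) * ((C:ℝ)/(5:ℝ)^(s+3)) = (C:ℝ)/(3:ℝ)^(q+3) := by
      field_simp
    rw [h1, h2, ← add_div, hABCr]
end helpers
end
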